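/- arXiv:2012.14633 — 11 statements merged into one kernel-verified Lean document; each statement's English description precedes it below -/
import Mathlib

section
/- Let N be a finite set and let g : 2^N → ℝ be a supermodular set function, with increment function ρ(i,S) = g(S ∪ {i}) − g(S). Then for all subsets S, T ⊆ N: (1) g(T) ≥ g(S) + Σ_{i ∈ T\S} ρ(i,S) − Σ_{i ∈ S\T} ρ(i, N\{i}); and (2) g(T) ≥ g(S) + Σ_{i ∈ T\S} ρ(i,∅) − Σ_{i ∈ S\T} ρ(i, S\{i}). -/
/-!
Both inequalities come from telescoping `g U - g S` over the elements of `U \ S`, added one at a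
time. Supermodularity makes each increment at least its value at `S` and at most its value at
`U \ {i}`, so `∑_{U \ S} ρ(i, S) ≤ g U - g S ≤ ∑_{U \ S} ρ(i, U \ {i})`. For (1) compare `S` and `T`
with `S ∪ T`, for (2) with `S ∩ T`; then move the increments once more, to `N \ {i}` and to `∅`.
-/

open Finset

namespace SetFunction

variable {ι : Type*} [DecidableEq ι]

def increment (g : Finset ι → ℝ) (i : ι) (S : Finset ι) : ℝ := g (insert i S) - g S

theorem self_add_increment (g : Finset ι → ℝ) (i : ι) (S : Finset ι) :
    g S + increment g i S = g (insert i S) :=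
  add_sub_cancel _ _

variable {g : Finset ι → ℝ}
  (hsup : ∀ (i : ι) (S T : Finset ι), S ⊆ T → i ∉ T → increment g i S ≤ increment g i T)
include hsup

theorem sum_increment_le_sub_of_disjoint {A S : Finset ι} (hAS : Disjoint A S) :
    ∑ i ∈ A, increment g i S ≤ g (S ∪ A) - g S := by
  induction A using Finset.induction_on with
  | empty => simp
  | insert a A haA ih =>
    obtain ⟨haS, hAS⟩ := disjoint_insert_left.mp hAS
    have hstep := hsup a S (S ∪ A) subset_union_left (by simp [haS, haA])
    rw [sum_insert haA, union_insert, ← self_add_increment g]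
    linarith [ih hAS]

theorem sub_le_sum_increment_of_disjoint {A S : Finset ι} (hAS : Disjoint A S) :
    g (S ∪ A) - g S ≤ ∑ i ∈ A, increment g i ((S ∪ A) \ {i}) := by
  induction A using Finset.induction_on with
  | empty => simp
  | insert a A haA ih =>
    obtain ⟨haS, hAS⟩ := disjoint_insert_left.mp hAS
    have haSA : a ∉ S ∪ A := by simp [haS, haA]
    have hlast : insert a (S ∪ A) \ {a} = S ∪ A := by
      rw [sdiff_singleton_eq_erase, erase_insert haSA]
    have hmono : ∑ i ∈ A, increment g i ((S ∪ A) \ {i}) ≤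
        ∑ i ∈ A, increment g i (insert a (S ∪ A) \ {i}) :=
      sum_le_sum fun i _ ↦ hsup i _ _ (sdiff_subset_sdiff (subset_insert a _) le_rfl) (by simp)
    rw [union_insert, sum_insert haA, hlast, ← self_add_increment g]
    linarith [ih hAS]

theorem sum_increment_le_sub {S U : Finset ι} (hSU : S ⊆ U) :
    ∑ i ∈ U \ S, increment g i S ≤ g U - g S := by
  simpa only [union_sdiff_of_subset hSU] using
    sum_increment_le_sub_of_disjoint hsup (sdiff_disjoint (s := S) (t := U))

theorem sub_le_sum_increment {S U : Finset ι} (hSU : S ⊆ U) :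
    g U - g S ≤ ∑ i ∈ U \ S, increment g i (U \ {i}) := by
  simpa only [union_sdiff_of_subset hSU] using
    sub_le_sum_increment_of_disjoint hsup (sdiff_disjoint (s := S) (t := U))

end SetFunction

open SetFunction in
/-- Nemhauser–Wolsey supermodular inequalities.
If `g` is a supermodular set function on the finite ground set `ι`, with increment
function `ρ(i,S) = g(S ∪ {i}) − g(S)`, then for all `S, T ⊆ N`:
(1) `g T ≥ g S + ∑_{i ∈ T\S} ρ(i,S) − ∑_{i ∈ S\T} ρ(i, N\{i})`, and
(2) `g T ≥ g S + ∑_{i ∈ T\S} ρ(i,∅) − ∑_{i ∈ S\T} ρ(i, S\{i})`. -/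
theorem stmt_0 {ι : Type*} [Fintype ι] [DecidableEq ι] (g : Finset ι → ℝ)
    (hsup : ∀ (i : ι) (S T : Finset ι), S ⊆ T → i ∉ T →
      g (insert i S) - g S ≤ g (insert i T) - g T)
    (S T : Finset ι) :
    (g S + (∑ i ∈ T \ S, (g (insert i S) - g S))
        - ∑ i ∈ S \ T, (g (insert i (Finset.univ \ {i})) - g (Finset.univ \ {i})) ≤ g T)
    ∧ (g S + (∑ i ∈ T \ S, (g (insert i ∅) - g ∅))
        - ∑ i ∈ S \ T, (g (insert i (S \ {i})) - g (S \ {i})) ≤ g T) := by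
  have hinc : ∀ i S T, S ⊆ T → i ∉ T → increment g i S ≤ increment g i T := hsup
  constructor
  · have hS := sum_increment_le_sub hinc (subset_union_left (s₁ := S) (s₂ := T))
    have hT := sub_le_sum_increment hinc (subset_union_right (s₁ := S) (s₂ := T))
    have hmono : ∑ i ∈ S \ T, increment g i ((S ∪ T) \ {i}) ≤
        ∑ i ∈ S \ T, increment g i (univ \ {i}) :=
      sum_le_sum fun i _ ↦ hinc i _ _ (sdiff_subset_sdiff (subset_univ _) le_rfl) (by simp)
    rw [union_sdiff_left] at hS
    rw [union_sdiff_right] at hT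
    unfold increment at *
    linarith
  · have hT := sum_increment_le_sub hinc (inter_subset_right (s₁ := S) (s₂ := T))
    have hS := sub_le_sum_increment hinc (inter_subset_left (s₁ := S) (s₂ := T))
    have hmono : ∑ i ∈ T \ S, increment g i ∅ ≤ ∑ i ∈ T \ S, increment g i (S ∩ T) :=
      sum_le_sum fun i hi ↦ hinc i _ _ (empty_subset _)
        (by simp [(mem_sdiff.mp hi).2])
    rw [sdiff_inter_self_right] at hT
    rw [sdiff_inter_self_left] at hS
    unfold increment at *
    linarith
end

section
/- Suppose h is supermodular, i.e., g_α is a supermodular set function for every α ∈ B. Then for every α ∈ B, every S ⊆ N, and every (x,y,t) ∈ H, both of the following linear inequalities hold: (1) α·y + g_α(S) + Σ_{i ∈ N\S} ρ_α(i,S) x_i − Σ_{i ∈ S} ρ_α(i, N\{i})(1 − x_i) ≤ t, and (2) α·y + g_α(S) + Σ_{i ∈ N\S} ρ_α(i,∅) x_i − Σ_{i ∈ S} ρ_α(i, S\{i})(1 − x_i) ≤ t. -/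
open Finset

noncomputable section

variable {ι : Type*}

/-- Indicator vector of a subset `S ⊆ N`. -/
def indVec [DecidableEq ι] (S : Finset ι) : ι → ℝ := fun i => if i ∈ S then 1 else 0

/-- `g_α(x) = inf_{y ∈ ℝ^N} (−α·y + h(x,y))`, with values in `ℝ ∪ {±∞}`. -/
def gA [Fintype ι] (h : (ι → ℝ) → (ι → ℝ) → EReal) (α x : ι → ℝ) : EReal :=
  ⨅ y : ι → ℝ, (((-(∑ i, α i * y i) : ℝ) : EReal) + h x y)

/-- `B = {α : g_α(x) is finite for every binary x}`. -/
def BSet [Fintype ι] [DecidableEq ι] (h : (ι → ℝ) → (ι → ℝ) → EReal) : Set (ι → ℝ) :=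
  {α | ∀ S : Finset ι, gA h α (indVec S) ≠ ⊤ ∧ gA h α (indVec S) ≠ ⊥}

/-- The (real-valued) set function `g_α`, identifying subsets with indicator vectors. -/
def gR [Fintype ι] [DecidableEq ι] (h : (ι → ℝ) → (ι → ℝ) → EReal)
    (α : ι → ℝ) (S : Finset ι) : ℝ := (gA h α (indVec S)).toReal

/-- Increment function `ρ_α(i,S) = g_α(S ∪ {i}) − g_α(S)`. -/
def rho [Fintype ι] [DecidableEq ι] (h : (ι → ℝ) → (ι → ℝ) → EReal)
    (α : ι → ℝ) (i : ι) (S : Finset ι) : ℝ := gR h α (insert i S) - gR h α S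

/-- The mixed 0-1 epigraph `H = {(x,y,t) : x binary, h(x,y) ≤ t}`. -/
def HSet [Fintype ι] (h : (ι → ℝ) → (ι → ℝ) → EReal) :
    Set ((ι → ℝ) × (ι → ℝ) × ℝ) :=
  {p | (∀ i, p.1 i = 0 ∨ p.1 i = 1) ∧ h p.1 p.2.1 ≤ ((p.2.2 : ℝ) : EReal)}

/-!
On a binary point `x = 𝟙_T` of the epigraph, `g_α(T) ≤ -α·y + h(𝟙_T, y) ≤ -α·y + t`, so both
inequalities reduce to lower bounds on `g_α(T)` in terms of `g_α(S)`: for a supermodular set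
function these are the Nemhauser–Wolsey inequalities. Each follows by telescoping `g` from `S`
up to `S ∪ T` and down to `T` (resp. down to `S ∩ T` and up to `T`), every increment being
compared with the prescribed one through the monotonicity of marginal values.
-/

section

variable [DecidableEq ι]

def marginal (g : Finset ι → ℝ) (i : ι) (S : Finset ι) : ℝ := g (insert i S) - g S

def Supermodular (g : Finset ι → ℝ) : Prop :=
  ∀ (i : ι) (S T : Finset ι), S ⊆ T → i ∉ T → marginal g i S ≤ marginal g i T

namespace Supermodular

variable {g : Finset ι → ℝ}

theorem sum_marginal_le_sub (hg : Supermodular g) {A D : Finset ι} (hAD : Disjoint A D) :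
    ∑ i ∈ D, marginal g i A ≤ g (A ∪ D) - g A := by
  induction D using Finset.induction_on with
  | empty => simp
  | @insert j D hj ih =>
    have hjA : j ∉ A := disjoint_right.mp hAD (mem_insert_self j D)
    have hmono := hg j A (A ∪ D) subset_union_left (by simp [hjA, hj])
    have hstep : marginal g j (A ∪ D) = g (insert j (A ∪ D)) - g (A ∪ D) := rfl
    rw [sum_insert hj, union_insert]
    linarith [ih (hAD.mono_right (subset_insert j D))]

theorem sub_le_sum_marginal (hg : Supermodular g) {D E : Finset ι} (hDE : D ⊆ E) :
    g E - g (E \ D) ≤ ∑ i ∈ D, marginal g i (E \ {i}) := by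
  induction D using Finset.induction_on with
  | empty => simp
  | @insert j D hj ih =>
    have hj' : j ∈ E \ D := mem_sdiff.mpr ⟨hDE (mem_insert_self j D), hj⟩
    have hmono := hg j ((E \ D) \ {j}) (E \ {j})
      (sdiff_subset_sdiff sdiff_subset le_rfl) (by simp)
    have hstep : marginal g j ((E \ D) \ {j}) = g (E \ D) - g (E \ insert j D) := by
      rw [marginal, sdiff_singleton_eq_erase, insert_erase hj', sdiff_insert]
    rw [sum_insert hj]
    linarith [ih ((subset_insert j D).trans hDE)]

theorem add_sum_marginal_sub_sum_marginal_univ_le [Fintype ι] (hg : Supermodular g)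
    (S T : Finset ι) :
    g S + ∑ i ∈ T \ S, marginal g i S - ∑ i ∈ S \ T, marginal g i (univ \ {i}) ≤ g T := by
  have hlower := hg.sum_marginal_le_sub (disjoint_sdiff : Disjoint S (T \ S))
  have hupper := hg.sub_le_sum_marginal (sdiff_subset.trans subset_union_left : S \ T ⊆ S ∪ T)
  have hmono : ∑ i ∈ S \ T, marginal g i ((S ∪ T) \ {i}) ≤
      ∑ i ∈ S \ T, marginal g i (univ \ {i}) :=
    sum_le_sum fun i _ => hg i _ _ (sdiff_subset_sdiff (subset_univ _) le_rfl) (by simp)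
  rw [union_sdiff_self_eq_union] at hlower
  rw [show (S ∪ T) \ (S \ T) = T by ext; simp; tauto] at hupper
  linarith

theorem add_sum_marginal_empty_sub_sum_marginal_le (hg : Supermodular g) (S T : Finset ι) :
    g S + ∑ i ∈ T \ S, marginal g i ∅ - ∑ i ∈ S \ T, marginal g i (S \ {i}) ≤ g T := by
  have hupper := hg.sub_le_sum_marginal (sdiff_subset : S \ T ⊆ S)
  have hlower := hg.sum_marginal_le_sub
    (disjoint_sdiff.mono_left inter_subset_left : Disjoint (S ∩ T) (T \ S))
  have hmono : ∑ i ∈ T \ S, marginal g i ∅ ≤ ∑ i ∈ T \ S, marginal g i (S ∩ T) :=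
    sum_le_sum fun i hi => hg i _ _ (empty_subset _) fun hi' =>
      (mem_sdiff.mp hi).2 (mem_inter.mp hi').1
  rw [sdiff_sdiff_self_left] at hupper
  rw [show S ∩ T ∪ T \ S = T by ext; simp; tauto] at hlower
  linarith

end Supermodular

theorem sum_mul_indVec (U T : Finset ι) (c : ι → ℝ) :
    ∑ i ∈ U, c i * indVec T i = ∑ i ∈ U ∩ T, c i := by
  simp [indVec, sum_ite_mem]

theorem sum_mul_one_sub_indVec (U T : Finset ι) (c : ι → ℝ) :
    ∑ i ∈ U, c i * (1 - indVec T i) = ∑ i ∈ U \ T, c i := by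
  rw [sdiff_eq_filter, sum_filter]
  exact sum_congr rfl fun i _ => by by_cases hi : i ∈ T <;> simp [indVec, hi]

theorem exists_eq_indVec [Fintype ι] {x : ι → ℝ} (hx : ∀ i, x i = 0 ∨ x i = 1) :
    ∃ T : Finset ι, x = indVec T :=
  ⟨univ.filter (x · = 1), funext fun i => by rcases hx i with hi | hi <;> simp [indVec, hi]⟩

theorem sum_mul_add_gR_le [Fintype ι] {h : (ι → ℝ) → (ι → ℝ) → EReal}
    {α : ι → ℝ} (hα : α ∈ BSet h) {T : Finset ι} {y : ι → ℝ} {t : ℝ}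
    (hle : h (indVec T) y ≤ t) : ∑ i, α i * y i + gR h α T ≤ t := by
  have hinf : gA h α (indVec T) ≤ ((-(∑ i, α i * y i) + t : ℝ) : EReal) := calc
    gA h α (indVec T) ≤ ((-(∑ i, α i * y i) : ℝ) : EReal) + h (indVec T) y := iInf_le _ y
    _ ≤ ((-(∑ i, α i * y i) : ℝ) : EReal) + t := add_le_add_right hle _
  have hreal := EReal.toReal_le_toReal hinf (hα T).2 (EReal.coe_ne_top _)
  rw [EReal.toReal_coe] at hreal
  unfold gR
  linarith

end

theorem stmt_1_general [Fintype ι] [DecidableEq ι] (h : (ι → ℝ) → (ι → ℝ) → EReal)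
    (hsup : ∀ α ∈ BSet h, ∀ (i : ι) (S T : Finset ι), S ⊆ T → i ∉ T →
      gR h α (insert i S) - gR h α S ≤ gR h α (insert i T) - gR h α T)
    (α : ι → ℝ) (hα : α ∈ BSet h) (S : Finset ι)
    (x y : ι → ℝ) (t : ℝ) (hmem : (x, y, t) ∈ HSet h) :
    ((∑ i, α i * y i) + gR h α S + (∑ i ∈ Finset.univ \ S, rho h α i S * x i)
        - ∑ i ∈ S, rho h α i (Finset.univ \ {i}) * (1 - x i) ≤ t)
    ∧ ((∑ i, α i * y i) + gR h α S + (∑ i ∈ Finset.univ \ S, rho h α i ∅ * x i)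
        - ∑ i ∈ S, rho h α i (S \ {i}) * (1 - x i) ≤ t) := by
  obtain ⟨hbinary, hle⟩ := hmem
  obtain ⟨T, rfl⟩ := exists_eq_indVec hbinary
  have hT := sum_mul_add_gR_le hα hle
  have hg : Supermodular (gR h α) := hsup α hα
  have h1 := hg.add_sum_marginal_sub_sum_marginal_univ_le S T
  have h2 := hg.add_sum_marginal_empty_sub_sum_marginal_le S T
  have hTS : (univ \ S) ∩ T = T \ S := by simp [sdiff_eq_inter_compl, inter_comm]
  rw [show rho h α = marginal (gR h α) from rfl]
  simp only [sum_mul_indVec, sum_mul_one_sub_indVec, hTS]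
  exact ⟨by linarith, by linarith⟩

/-- If `h` is supermodular (i.e. `g_α` is supermodular for every `α ∈ B`),
then for every `α ∈ B`, `S ⊆ N` and `(x,y,t) ∈ H` the two linear supermodular
inequalities hold. -/
theorem stmt_1 [Fintype ι] [DecidableEq ι] (h : (ι → ℝ) → (ι → ℝ) → EReal)
    (hne : ∀ x y, h x y ≠ ⊥)
    (hsup : ∀ α ∈ BSet h, ∀ (i : ι) (S T : Finset ι), S ⊆ T → i ∉ T →
      gR h α (insert i S) - gR h α S ≤ gR h α (insert i T) - gR h α T)
    (α : ι → ℝ) (hα : α ∈ BSet h) (S : Finset ι)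
    (x y : ι → ℝ) (t : ℝ) (hmem : (x, y, t) ∈ HSet h) :
    ((∑ i, α i * y i) + gR h α S + (∑ i ∈ Finset.univ \ S, rho h α i S * x i)
        - ∑ i ∈ S, rho h α i (Finset.univ \ {i}) * (1 - x i) ≤ t)
    ∧ ((∑ i, α i * y i) + gR h α S + (∑ i ∈ Finset.univ \ S, rho h α i ∅ * x i)
        - ∑ i ∈ S, rho h α i (S \ {i}) * (1 - x i) ≤ t) :=
  stmt_1_general h hsup α hα S x y t hmem

end
end

section
/- For every α ∈ ℝ^N, the function v_α(x) = sup{ α·y : y ∈ FC(x) } (with value −∞ when FC(x) is empty) is submodular as a set function on 2^N: identifying subsets with their indicator vectors, v_α(x_{S∪T}) + v_α(x_{S∩T}) ≤ v_α(x_S) + v_α(x_T) for all S, T ⊆ N. -/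
open Finset

noncomputable section

variable {ι : Type*}

/-- The fixed-charge network set `FC(x)` for the subset `W` (indicator `x = x_W`). -/
def FCSet [Fintype ι] (Np Nm Ap Am : Finset ι) (b : ℝ) (u : ι → ℝ) (W : Finset ι) :
    Set (ι → ℝ) :=
  {y | (∀ i, 0 ≤ y i) ∧
       (∑ i ∈ Np, y i) + (∑ i ∈ Ap, y i) - (∑ i ∈ Am, y i) - (∑ i ∈ Nm, y i) ≤ b ∧
       (∀ i, y i ≤ u i) ∧
       (∀ i ∈ Np, i ∉ W → y i = 0) ∧
       (∀ i ∈ Nm, i ∈ W → y i = 0)}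

/-- `v_α(x) = sup {α·y : y ∈ FC(x)}`, with value `−∞` when `FC(x)` is empty. -/
def vAlpha [Fintype ι] (Np Nm Ap Am : Finset ι) (b : ℝ) (u : ι → ℝ) (α : ι → ℝ)
    (W : Finset ι) : EReal :=
  ⨆ y ∈ FCSet Np Nm Ap Am b u W, ((∑ i, α i * y i : ℝ) : EReal)

/-- Auxiliary budget function. -/
private def Bud (Np Nm Ap Am : Finset ι) (v : ι → ℝ) : ℝ :=
  (∑ i ∈ Np, v i) + (∑ i ∈ Ap, v i) - (∑ i ∈ Am, v i) - (∑ i ∈ Nm, v i)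

private lemma Bud_le_Bud (Np Nm Ap Am : Finset ι) (a c : ι → ℝ)
    (hNp : ∀ i ∈ Np, a i ≤ c i) (hAp : ∀ i ∈ Ap, a i ≤ c i)
    (hAm : ∀ i ∈ Am, c i ≤ a i) (hNm : ∀ i ∈ Nm, c i ≤ a i) :
    Bud Np Nm Ap Am a ≤ Bud Np Nm Ap Am c := by
  have e1 := Finset.sum_le_sum hNp
  have e2 := Finset.sum_le_sum hAp
  have e3 := Finset.sum_le_sum hAm
  have e4 := Finset.sum_le_sum hNm
  simp only [Bud]; linarith

private lemma pair_mem [Fintype ι] (Np Nm Ap Am : Finset ι) (b : ℝ) (u : ι → ℝ)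
    (S T : Finset ι) (y z v : ι → ℝ)
    (hP : ∀ i, 0 ≤ v i ∧ v i ≤ u i ∧ v i ≤ y i + z i ∧ y i + z i - u i ≤ v i ∧
      (i ∈ Np → i ∉ S → v i = 0) ∧ (i ∈ Nm → i ∈ S → v i = 0) ∧
      (i ∈ Np → i ∉ T → v i = y i + z i) ∧ (i ∈ Nm → i ∈ T → v i = y i + z i))
    (hb1 : Bud Np Nm Ap Am v ≤ b)
    (hb2 : Bud Np Nm Ap Am (fun i => y i + z i - v i) ≤ b) :
    v ∈ FCSet Np Nm Ap Am b u S ∧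
      (fun i => y i + z i - v i) ∈ FCSet Np Nm Ap Am b u T := by
  constructor
  · exact ⟨fun i => (hP i).1, hb1, fun i => (hP i).2.1,
      fun i hi hiS => (hP i).2.2.2.2.1 hi hiS, fun i hi hiS => (hP i).2.2.2.2.2.1 hi hiS⟩
  · refine ⟨fun i => by have := (hP i).2.2.1; simp only; linarith, hb2,
      fun i => by have := (hP i).2.2.2.1; simp only; linarith,
      fun i hi hiT => by have := (hP i).2.2.2.2.2.2.1 hi hiT; simp only; linarith,
      fun i hi hiT => by have := (hP i).2.2.2.2.2.2.2 hi hiT; simp only; linarith⟩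

set_option maxHeartbeats 1600000 in
private lemma exchange [Fintype ι] [DecidableEq ι]
    (Np Nm Ap Am : Finset ι)
    (h1 : Disjoint Np Nm) (h2 : Disjoint Np Ap) (h3 : Disjoint Np Am)
    (h4 : Disjoint Nm Ap) (h5 : Disjoint Nm Am) (h6 : Disjoint Ap Am)
    (b : ℝ) (u : ι → ℝ) (hu : ∀ i, 0 ≤ u i)
    (S T : Finset ι) (y z : ι → ℝ)
    (hy : y ∈ FCSet Np Nm Ap Am b u (S ∪ T))
    (hz : z ∈ FCSet Np Nm Ap Am b u (S ∩ T)) :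
    ∃ y' ∈ FCSet Np Nm Ap Am b u S, ∃ z' ∈ FCSet Np Nm Ap Am b u T,
      ∀ i, y' i + z' i = y i + z i := by
  classical
  obtain ⟨hy0, hyb, hyu, hyNp, hyNm⟩ := hy
  obtain ⟨hz0, hzb, hzu, hzNp, hzNm⟩ := hz
  -- helper zero facts
  have hzNpS : ∀ i ∈ Np, i ∉ S → z i = 0 := fun i hi hiS =>
    hzNp i hi fun hmem => hiS (Finset.mem_inter.mp hmem).1
  have hzNpT : ∀ i ∈ Np, i ∉ T → z i = 0 := fun i hi hiT =>
    hzNp i hi fun hmem => hiT (Finset.mem_inter.mp hmem).2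
  have hyNpU : ∀ i ∈ Np, i ∉ S → i ∉ T → y i = 0 := fun i hi hiS hiT =>
    hyNp i hi fun hmem => (Finset.mem_union.mp hmem).elim hiS hiT
  have hyNmS : ∀ i ∈ Nm, i ∈ S → y i = 0 := fun i hi hiS =>
    hyNm i hi (Finset.mem_union_left _ hiS)
  have hyNmT : ∀ i ∈ Nm, i ∈ T → y i = 0 := fun i hi hiT =>
    hyNm i hi (Finset.mem_union_right _ hiT)
  have hzNmST : ∀ i ∈ Nm, i ∈ S → i ∈ T → z i = 0 := fun i hi hiS hiT =>
    hzNm i hi (Finset.mem_inter.mpr ⟨hiS, hiT⟩)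
  set A : ι → ℝ := fun i => if i ∈ Np then (if i ∈ S then y i else 0)
    else if i ∈ Nm then (if i ∈ S then 0 else if i ∈ T then y i + z i else y i)
    else y i with hAdef
  set Bv : ι → ℝ := fun i => if i ∈ Np then (if i ∈ S then min (u i) (y i + z i) else 0)
    else if i ∈ Nm then (if i ∈ S then 0 else if i ∈ T then y i + z i
      else max 0 (y i + z i - u i))
    else if i ∈ Ap then min (u i) (y i + z i) else max 0 (y i + z i - u i) with hBdef
  -- the per-coordinate conditions for A and Bv
  have hPA : ∀ v ∈ ({A, Bv} : Set (ι → ℝ)), ∀ i,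
      0 ≤ v i ∧ v i ≤ u i ∧ v i ≤ y i + z i ∧ y i + z i - u i ≤ v i ∧
      (i ∈ Np → i ∉ S → v i = 0) ∧ (i ∈ Nm → i ∈ S → v i = 0) ∧
      (i ∈ Np → i ∉ T → v i = y i + z i) ∧ (i ∈ Nm → i ∈ T → v i = y i + z i) := by
    intro v hv i
    have h0y := hy0 i; have h0z := hz0 i; have huy := hyu i; have huz := hzu i
    have h0u := hu i
    rcases hv with hv | hv
    all_goals subst hv
    all_goals by_cases hNp : i ∈ Np
    all_goals try have hNm : i ∉ Nm := Finset.disjoint_left.mp h1 hNp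
    all_goals (try by_cases hNm : i ∈ Nm)
    all_goals by_cases hS : i ∈ S
    all_goals by_cases hT : i ∈ T
    all_goals try have e1 := hzNpS i hNp hS
    all_goals try have e2 := hzNpT i hNp hT
    all_goals try have e3 := hyNpU i hNp hS hT
    all_goals try have e4 := hyNmS i hNm hS
    all_goals try have e5 := hyNmT i hNm hT
    all_goals try have e6 := hzNmST i hNm hS hT
    all_goals simp only [hAdef, hBdef, hNp, hNm, hS, hT, if_true, if_false,
      ite_true, ite_false, not_true_eq_false, not_false_eq_true, IsEmpty.forall_iff,
      forall_true_left, true_implies, false_implies, implies_true, and_true, true_and]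
    all_goals and_intros
    all_goals intros
    all_goals first
      | rfl
      | contradiction
      | linarith
      | (simp only [min_def, max_def]; split_ifs <;> linarith)
  have hPA' := hPA A (Or.inl rfl)
  have hPB' := hPA Bv (Or.inr rfl)
  -- budget comparisons
  have hyb' : Bud Np Nm Ap Am y ≤ b := hyb
  have hzb' : Bud Np Nm Ap Am z ≤ b := hzb
  have hAle : Bud Np Nm Ap Am A ≤ Bud Np Nm Ap Am y := by
    refine Bud_le_Bud _ _ _ _ _ _ ?_ ?_ ?_ ?_
    · intro i hi
      have hNm : i ∉ Nm := Finset.disjoint_left.mp h1 hi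
      by_cases hS : i ∈ S <;> simp [hAdef, hi, hS, hy0 i]
    · intro i hi
      have hNp : i ∉ Np := Finset.disjoint_right.mp h2 hi
      have hNm : i ∉ Nm := Finset.disjoint_right.mp h4 hi
      simp [hAdef, hNp, hNm]
    · intro i hi
      have hNp : i ∉ Np := Finset.disjoint_right.mp h3 hi
      have hNm : i ∉ Nm := Finset.disjoint_right.mp h5 hi
      simp [hAdef, hNp, hNm]
    · intro i hi
      have hNp' : i ∉ Np := fun h => Finset.disjoint_left.mp h1 h hi
      by_cases hS : i ∈ S
      · have := hyNmS i hi hS; simp [hAdef, hNp', hS, hi, this]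
      · by_cases hT : i ∈ T
        · have := hyNmT i hi hT
          simp only [hAdef, hNp', hS, hi, if_false, if_true, ite_true, ite_false]
          simp [this, hT, hz0 i]
        · simp [hAdef, hNp', hS, hT, hi]
  have hBle : Bud Np Nm Ap Am (fun i => y i + z i - Bv i) ≤ Bud Np Nm Ap Am y := by
    refine Bud_le_Bud _ _ _ _ _ _ ?_ ?_ ?_ ?_
    · intro i hi
      have hNm : i ∉ Nm := Finset.disjoint_left.mp h1 hi
      by_cases hS : i ∈ S
      · simp only [hBdef, hi, hS, if_true, ite_true]
        linarith [le_min (hzu i) (by linarith [hy0 i] : z i ≤ y i + z i)]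
      · have := hzNpS i hi hS
        simp only [hBdef, hi, hS, if_true, ite_true, if_false, ite_false]
        linarith
    · intro i hi
      have hNp : i ∉ Np := Finset.disjoint_right.mp h2 hi
      have hNm : i ∉ Nm := Finset.disjoint_right.mp h4 hi
      simp only [hBdef, hNp, hNm, hi, if_true, ite_true, if_false, ite_false]
      linarith [le_min (hzu i) (by linarith [hy0 i] : z i ≤ y i + z i)]
    · intro i hi
      have hNp : i ∉ Np := Finset.disjoint_right.mp h3 hi
      have hNm : i ∉ Nm := Finset.disjoint_right.mp h5 hi
      have hAp : i ∉ Ap := Finset.disjoint_right.mp h6 hi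
      simp only [hBdef, hNp, hNm, hAp, if_true, ite_true, if_false, ite_false]
      linarith [max_le (hz0 i) (by linarith [hyu i] : y i + z i - u i ≤ z i)]
    · intro i hi
      have hNp : i ∉ Np := fun h => Finset.disjoint_left.mp h1 h hi
      by_cases hS : i ∈ S
      · simp only [hBdef, hNp, hi, hS, if_true, ite_true, if_false, ite_false]
        linarith [hz0 i]
      · by_cases hT : i ∈ T
        · have := hyNmT i hi hT
          simp only [hBdef, hNp, hi, hS, hT, if_true, ite_true, if_false, ite_false]
          linarith
        · simp only [hBdef, hNp, hi, hS, hT, if_true, ite_true, if_false, ite_false]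
          linarith [max_le (hz0 i) (by linarith [hyu i] : y i + z i - u i ≤ z i)]
  have hβA : Bud Np Nm Ap Am A ≤ b := le_trans hAle hyb'
  by_cases hcase : Bud Np Nm Ap Am Bv ≤ b
  · obtain ⟨hm1, hm2⟩ := pair_mem Np Nm Ap Am b u S T y z Bv hPB' hcase
      (le_trans hBle hyb')
    exact ⟨Bv, hm1, fun i => y i + z i - Bv i, hm2, fun i => by ring⟩
  · push_neg at hcase
    set βA := Bud Np Nm Ap Am A with hbadef
    set βB := Bud Np Nm Ap Am Bv with hbbdef
    have hd : 0 < βB - βA := by linarith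
    set t : ℝ := (b - βA) / (βB - βA) with htdef
    have ht0 : 0 ≤ t := div_nonneg (by linarith) (by linarith)
    have ht1 : t ≤ 1 := by
      rw [htdef, div_le_one hd]; linarith
    have ht1' : 0 ≤ 1 - t := by linarith
    have htmul : t * (βB - βA) = b - βA := div_mul_cancel₀ _ (ne_of_gt hd)
    set v : ι → ℝ := fun i => (1 - t) * A i + t * Bv i with hvdef
    have hPv : ∀ i, 0 ≤ v i ∧ v i ≤ u i ∧ v i ≤ y i + z i ∧ y i + z i - u i ≤ v i ∧
        (i ∈ Np → i ∉ S → v i = 0) ∧ (i ∈ Nm → i ∈ S → v i = 0) ∧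
        (i ∈ Np → i ∉ T → v i = y i + z i) ∧ (i ∈ Nm → i ∈ T → v i = y i + z i) := by
      intro i
      obtain ⟨a1, a2, a3, a4, a5, a6, a7, a8⟩ := hPA' i
      obtain ⟨b1, b2, b3, b4, b5, b6, b7, b8⟩ := hPB' i
      have m1 := mul_le_mul_of_nonneg_left a2 ht1'
      have m2 := mul_le_mul_of_nonneg_left b2 ht0
      have m3 := mul_le_mul_of_nonneg_left a3 ht1'
      have m4 := mul_le_mul_of_nonneg_left b3 ht0
      have m5 := mul_le_mul_of_nonneg_left a4 ht1'
      have m6 := mul_le_mul_of_nonneg_left b4 ht0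
      have m7 := mul_nonneg ht1' a1
      have m8 := mul_nonneg ht0 b1
      refine ⟨by simp only [hvdef]; linarith, by simp only [hvdef]; nlinarith,
        by simp only [hvdef]; nlinarith, by simp only [hvdef]; nlinarith,
        fun h h' => by simp only [hvdef, a5 h h', b5 h h']; ring,
        fun h h' => by simp only [hvdef, a6 h h', b6 h h']; ring,
        fun h h' => by simp only [hvdef, a7 h h', b7 h h']; ring,
        fun h h' => by simp only [hvdef, a8 h h', b8 h h']; ring⟩
    have hBv' : Bud Np Nm Ap Am v = (1 - t) * βA + t * βB := by
      simp only [hvdef, hbadef, hbbdef, Bud, Finset.sum_add_distrib, ← Finset.mul_sum]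
      ring
    have hBveq : Bud Np Nm Ap Am v = b := by rw [hBv']; nlinarith [htmul]
    have hBsub : Bud Np Nm Ap Am (fun i => y i + z i - v i)
        = Bud Np Nm Ap Am (fun i => y i + z i) - Bud Np Nm Ap Am v := by
      simp only [Bud, Finset.sum_sub_distrib]; ring
    have hBadd : Bud Np Nm Ap Am (fun i => y i + z i)
        = Bud Np Nm Ap Am y + Bud Np Nm Ap Am z := by
      simp only [Bud, Finset.sum_add_distrib]; ring
    have hb2 : Bud Np Nm Ap Am (fun i => y i + z i - v i) ≤ b := by
      rw [hBsub, hBadd, hBveq]; linarith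
    obtain ⟨hm1, hm2⟩ := pair_mem Np Nm Ap Am b u S T y z v hPv (by rw [hBveq]) hb2
    exact ⟨v, hm1, fun i => y i + z i - v i, hm2, fun i => by ring⟩

/-- Wolsey. For every `α`, the function `v_α` is submodular as a set
function on `2^N`: `v_α(S ∪ T) + v_α(S ∩ T) ≤ v_α(S) + v_α(T)` for all `S, T ⊆ N`. -/
theorem stmt_4 [Fintype ι] [DecidableEq ι]
    (Np Nm Ap Am : Finset ι)
    (h1 : Disjoint Np Nm) (h2 : Disjoint Np Ap) (h3 : Disjoint Np Am)
    (h4 : Disjoint Nm Ap) (h5 : Disjoint Nm Am) (h6 : Disjoint Ap Am)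
    (hU : Np ∪ Nm ∪ Ap ∪ Am = Finset.univ)
    (b : ℝ) (u : ι → ℝ) (hu : ∀ i, 0 ≤ u i) (α : ι → ℝ)
    (S T : Finset ι) :
    vAlpha Np Nm Ap Am b u α (S ∪ T) + vAlpha Np Nm Ap Am b u α (S ∩ T) ≤
      vAlpha Np Nm Ap Am b u α S + vAlpha Np Nm Ap Am b u α T := by
  refine EReal.add_le_of_forall_lt fun p hp q hq => ?_
  simp only [vAlpha, lt_iSup_iff] at hp hq
  obtain ⟨y, hy, hpy⟩ := hp
  obtain ⟨z, hz, hqz⟩ := hq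
  obtain ⟨y', hy', z', hz', hsum⟩ :=
    exchange Np Nm Ap Am h1 h2 h3 h4 h5 h6 b u hu S T y z hy hz
  have key : (∑ i, α i * y i) + (∑ i, α i * z i)
      = (∑ i, α i * y' i) + (∑ i, α i * z' i) := by
    rw [← Finset.sum_add_distrib, ← Finset.sum_add_distrib]
    exact Finset.sum_congr rfl fun i _ => by rw [← mul_add, ← mul_add, hsum i]
  have hy'le : ((∑ i, α i * y' i : ℝ) : EReal) ≤ vAlpha Np Nm Ap Am b u α S := by
    rw [vAlpha]
    exact le_iSup₂ (f := fun w (_ : w ∈ FCSet Np Nm Ap Am b u S) =>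
      ((∑ i, α i * w i : ℝ) : EReal)) y' hy'
  have hz'le : ((∑ i, α i * z' i : ℝ) : EReal) ≤ vAlpha Np Nm Ap Am b u α T := by
    rw [vAlpha]
    exact le_iSup₂ (f := fun w (_ : w ∈ FCSet Np Nm Ap Am b u T) =>
      ((∑ i, α i * w i : ℝ) : EReal)) z' hz'
  calc p + q ≤ ((∑ i, α i * y i : ℝ) : EReal) + ((∑ i, α i * z i : ℝ) : EReal) :=
        add_le_add hpy.le hqz.le
    _ = ((∑ i, α i * y' i : ℝ) : EReal) + ((∑ i, α i * z' i : ℝ) : EReal) := by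
        rw [← EReal.coe_add, ← EReal.coe_add, key]
    _ ≤ _ := add_le_add hy'le hz'le

end
end

section
/- Let X¹ = {(x,y,t) ∈ {0,1} × ℝ₊ × ℝ : y² ≤ t and y(1−x) = 0}. Then the closure of the convex hull of X¹ equals {(x,y,t) ∈ [0,1] × ℝ₊ × ℝ₊ : y² ≤ t·x}. -/
lemma cross_ineq (x₁ y₁ t₁ x₂ y₂ t₂ : ℝ)
    (hx₁ : 0 ≤ x₁) (ht₁ : 0 ≤ t₁) (h₁ : y₁ ^ 2 ≤ t₁ * x₁)
    (hx₂ : 0 ≤ x₂) (ht₂ : 0 ≤ t₂) (h₂ : y₂ ^ 2 ≤ t₂ * x₂) :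
    2 * (y₁ * y₂) ≤ t₁ * x₂ + t₂ * x₁ := by
  rcases eq_or_lt_of_le hx₁ with h | h
  · have hy1 : y₁ = 0 := by nlinarith [sq_nonneg y₁]
    subst hy1
    nlinarith [mul_nonneg ht₁ hx₂, mul_nonneg ht₂ hx₁]
  rcases eq_or_lt_of_le hx₂ with h' | h'
  · have hy2 : y₂ = 0 := by nlinarith [sq_nonneg y₂]
    subst hy2
    nlinarith [mul_nonneg ht₁ hx₂, mul_nonneg ht₂ hx₁]
  nlinarith [sq_nonneg (y₁ * x₂ - y₂ * x₁), mul_le_mul_of_nonneg_right h₁ (sq_nonneg x₂),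
    mul_le_mul_of_nonneg_right h₂ (sq_nonneg x₁), mul_pos h h']

lemma key_ineq (x₁ y₁ t₁ x₂ y₂ t₂ a b : ℝ)
    (hx₁ : 0 ≤ x₁) (ht₁ : 0 ≤ t₁) (h₁ : y₁ ^ 2 ≤ t₁ * x₁)
    (hx₂ : 0 ≤ x₂) (ht₂ : 0 ≤ t₂) (h₂ : y₂ ^ 2 ≤ t₂ * x₂)
    (ha : 0 ≤ a) (hb : 0 ≤ b) :
    (a * y₁ + b * y₂) ^ 2 ≤ (a * t₁ + b * t₂) * (a * x₁ + b * x₂) := by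
  have hc := cross_ineq x₁ y₁ t₁ x₂ y₂ t₂ hx₁ ht₁ h₁ hx₂ ht₂ h₂
  nlinarith [mul_nonneg (mul_nonneg ha hb) (sub_nonneg.2 hc),
    mul_nonneg (sq_nonneg a) (sub_nonneg.2 h₁), mul_nonneg (sq_nonneg b) (sub_nonneg.2 h₂)]

/-- perspective reformulation.
The closed convex hull of `X¹ = {(x,y,t) ∈ {0,1} × ℝ₊ × ℝ : y² ≤ t, y(1−x) = 0}` equals
`{(x,y,t) ∈ [0,1] × ℝ₊ × ℝ₊ : y² ≤ t·x}`. -/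
theorem stmt_5 :
    closure (convexHull ℝ {p : ℝ × ℝ × ℝ |
        (p.1 = 0 ∨ p.1 = 1) ∧ 0 ≤ p.2.1 ∧ p.2.1 ^ 2 ≤ p.2.2 ∧ p.2.1 * (1 - p.1) = 0})
      = {p : ℝ × ℝ × ℝ | 0 ≤ p.1 ∧ p.1 ≤ 1 ∧ 0 ≤ p.2.1 ∧ 0 ≤ p.2.2 ∧
          p.2.1 ^ 2 ≤ p.2.2 * p.1} := by
  set X : Set (ℝ × ℝ × ℝ) := {p : ℝ × ℝ × ℝ |
      (p.1 = 0 ∨ p.1 = 1) ∧ 0 ≤ p.2.1 ∧ p.2.1 ^ 2 ≤ p.2.2 ∧ p.2.1 * (1 - p.1) = 0} with hX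
  set S : Set (ℝ × ℝ × ℝ) := {p : ℝ × ℝ × ℝ | 0 ≤ p.1 ∧ p.1 ≤ 1 ∧ 0 ≤ p.2.1 ∧ 0 ≤ p.2.2 ∧
      p.2.1 ^ 2 ≤ p.2.2 * p.1} with hS
  have hconv : Convex ℝ S := by
    intro p hp q hq a b ha hb hab
    obtain ⟨hp1, hp2, hp3, hp4, hp5⟩ := hp
    obtain ⟨hq1, hq2, hq3, hq4, hq5⟩ := hq
    simp only [hS, Set.mem_setOf_eq, Prod.fst_add, Prod.snd_add, Prod.smul_fst, Prod.smul_snd,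
      smul_eq_mul]
    refine ⟨by positivity, by nlinarith, by positivity, by positivity, ?_⟩
    have := key_ineq p.1 p.2.1 p.2.2 q.1 q.2.1 q.2.2 a b hp1 hp4 (by nlinarith) hq1 hq4
      (by nlinarith) ha hb
    nlinarith [this]
  have hclosed : IsClosed S := by
    rw [hS]
    simp only [Set.setOf_and]
    have c1 : Continuous fun p : ℝ × ℝ × ℝ => p.1 := continuous_fst
    have c2 : Continuous fun p : ℝ × ℝ × ℝ => p.2.1 := continuous_fst.comp continuous_snd
    have c3 : Continuous fun p : ℝ × ℝ × ℝ => p.2.2 := continuous_snd.comp continuous_snd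
    exact (isClosed_le continuous_const c1).inter ((isClosed_le c1 continuous_const).inter
      ((isClosed_le continuous_const c2).inter ((isClosed_le continuous_const c3).inter
      (isClosed_le (c2.pow 2) (c3.mul c1)))))
  have hXS : X ⊆ S := by
    rintro ⟨x, y, t⟩ ⟨hx01, hy, hyt, hcomp⟩
    dsimp only at *
    simp only [hS, Set.mem_setOf_eq]
    rcases hx01 with rfl | rfl
    · have hy0 : y = 0 := by simpa using hcomp
      subst hy0
      refine ⟨le_refl 0, by norm_num, le_refl 0, by nlinarith, by nlinarith⟩
    · exact ⟨by norm_num, le_refl 1, hy, by nlinarith, by nlinarith⟩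
  have hsub1 : closure (convexHull ℝ X) ⊆ S :=
    closure_minimal (convexHull_min hXS hconv) hclosed
  have hsub2 : S ⊆ convexHull ℝ X := by
    rintro ⟨x, y, t⟩ ⟨hx0, hx1, hy, ht, hyt⟩
    dsimp only at *
    rcases eq_or_lt_of_le hx0 with h | h
    · obtain rfl := h.symm
      have hy0 : y = 0 := by nlinarith [sq_nonneg y]
      subst hy0
      apply subset_convexHull
      simp only [hX, Set.mem_setOf_eq]
      norm_num
      nlinarith
    · have hxne : x ≠ 0 := ne_of_gt h
      have h1 : ((1 : ℝ), y / x, t / x) ∈ X := by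
        refine ⟨Or.inr rfl, by positivity, ?_, by ring⟩
        show (y / x) ^ 2 ≤ t / x
        rw [div_pow, div_le_div_iff₀ (by positivity) h]
        nlinarith
      have h2 : ((0 : ℝ), (0 : ℝ), (0 : ℝ)) ∈ X := by
        simp [hX]
      have hmem := (convex_convexHull ℝ X) (subset_convexHull ℝ X h1)
        (subset_convexHull ℝ X h2) hx0 (by linarith : (0:ℝ) ≤ 1 - x) (by ring)
      have heq : (x, y, t) = x • ((1:ℝ), y / x, t / x)
          + (1 - x) • ((0:ℝ), (0:ℝ), (0:ℝ)) := by
        simp only [Prod.smul_mk, smul_eq_mul, Prod.mk_add_mk, mul_zero, add_zero]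
        refine Prod.ext ?_ (Prod.ext ?_ ?_) <;> dsimp only <;> field_simp
      rw [heq]
      exact hmem
  exact Set.Subset.antisymm hsub1 (hsub2.trans subset_closure)
end

section
/- Let N = {1,…,n} and X_f = {(x,y,t) ∈ {0,1}^N × ℝ^N × ℝ : (Σ_{i∈N} y_i)² ≤ t and y_i(1−x_i) = 0 for all i ∈ N}. Then the closure of the convex hull of X_f equals {(x,y,t) ∈ [0,1]^N × ℝ^N × ℝ : (Σ_{i∈N} y_i)² ≤ t and (Σ_{i∈N} y_i)² ≤ t · Σ_{i∈N} x_i}. -/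
open Finset

private lemma linear_coeff_zero {u p q : ℝ} (h : ∀ r : ℝ, u ≤ p + r * q) : q = 0 := by
  by_contra hq
  have h1 := h ((u - 1 - p) / q)
  rw [div_mul_cancel₀ _ hq] at h1
  linarith

private lemma sum_single_smul {n : ℕ} (v : Fin n → ℝ) :
    ∑ i, v i • (Pi.single i 1 : Fin n → ℝ) = v := by
  ext j
  simp [Finset.sum_apply, Pi.single_apply]

private lemma key_lemma {n : ℕ} (f : ((Fin n → ℝ) × (Fin n → ℝ) × ℝ) →L[ℝ] ℝ) (u : ℝ)
    (hX : ∀ x y : Fin n → ℝ, ∀ t : ℝ, (∀ i, x i = 0 ∨ x i = 1) → (∑ i, y i) ^ 2 ≤ t →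
      (∀ i, y i * (1 - x i) = 0) → u ≤ f (x, y, t))
    (x y : Fin n → ℝ) (t : ℝ) (hx : ∀ i, 0 ≤ x i ∧ x i ≤ 1)
    (h1 : (∑ i, y i) ^ 2 ≤ t) (h2 : (∑ i, y i) ^ 2 ≤ t * ∑ i, x i) :
    u ≤ f (x, y, t) := by
  set a : Fin n → ℝ := fun i => f (Pi.single i 1, 0, 0) with ha
  set b : Fin n → ℝ := fun i => f (0, Pi.single i 1, 0) with hbdef
  set c : ℝ := f (0, 0, 1) with hcdef
  have hf : ∀ (x y : Fin n → ℝ) (t : ℝ),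
      f (x, y, t) = ∑ i, x i * a i + ∑ i, y i * b i + t * c := by
    intro x y t
    have hxyt : (x, y, t) = (∑ i, x i • ((Pi.single i 1 : Fin n → ℝ), (0 : Fin n → ℝ), (0:ℝ)))
        + ((∑ i, y i • ((0 : Fin n → ℝ), (Pi.single i 1 : Fin n → ℝ), (0:ℝ)))
        + t • ((0 : Fin n → ℝ), (0 : Fin n → ℝ), (1:ℝ))) := by
      have e1 := sum_single_smul x
      have e2 := sum_single_smul y
      refine Prod.ext ?_ (Prod.ext ?_ ?_)
      · simp [Prod.fst_sum, e1]
      · simp [Prod.fst_sum, Prod.snd_sum, e2]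
      · simp [Prod.snd_sum]
    rw [hxyt, map_add, map_add, map_sum, map_sum, map_smul]
    simp only [map_smul, smul_eq_mul, ha, hbdef, hcdef]
    ring
  -- basic points
  have F0 : ∀ r : ℝ, 0 ≤ r → u ≤ r * c := by
    intro r hr
    have h := hX 0 0 r (fun i => Or.inl rfl) (by simpa using hr) (fun i => by simp)
    rw [hf] at h
    simpa using h
  have hu0 : u ≤ 0 := by simpa using F0 0 le_rfl
  have point : ∀ (S : Finset (Fin n)) (z : ℝ) (i₁ : Fin n), i₁ ∈ S →
      u ≤ (∑ k ∈ S, a k) + z * b i₁ + z ^ 2 * c := by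
    intro S z i₁ hi₁
    have h := hX (fun k => if k ∈ S then 1 else 0) (fun k => if k = i₁ then z else 0) (z ^ 2)
      (fun k => by by_cases h : k ∈ S <;> simp [h])
      (by simp)
      (fun k => by
        by_cases hk : k = i₁
        · subst hk; simp [hi₁]
        · simp [hk])
    rw [hf] at h
    simpa [ite_mul, Finset.sum_ite_mem, Finset.univ_inter, mul_comm] using h
  have point0 : ∀ S : Finset (Fin n), u ≤ ∑ k ∈ S, a k := by
    intro S
    have h := hX (fun k => if k ∈ S then 1 else 0) 0 0
      (fun k => by by_cases h : k ∈ S <;> simp [h]) (by simp) (fun k => by simp)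
    rw [hf] at h
    simpa [ite_mul, Finset.sum_ite_mem, Finset.univ_inter] using h
  have hc : 0 ≤ c := by
    by_contra hcneg
    push_neg at hcneg
    have hr : 0 ≤ (u - 1) / c :=
      div_nonneg_iff.2 (Or.inr ⟨by linarith, le_of_lt hcneg⟩)
    have := F0 _ hr
    rw [div_mul_cancel₀ _ (ne_of_lt hcneg)] at this
    linarith
  have hbconst : ∀ i j : Fin n, b i = b j := by
    intro i j
    rcases eq_or_ne i j with hij | hij
    · rw [hij]
    · have key2 : ∀ r : ℝ, u ≤ (a i + a j) + r * (b i - b j) := by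
        intro r
        have hF := hX (fun k => if k = i ∨ k = j then 1 else 0)
          (fun k => (if k = i then r else 0) + (if k = j then -r else 0)) 0
          (fun k => by by_cases hk : k = i ∨ k = j <;> simp [hk])
          (by
            rw [Finset.sum_add_distrib]
            norm_num)
          (fun k => by
            by_cases hki : k = i
            · subst hki; simp [hij]
            · by_cases hkj : k = j
              · subst hkj; simp [hki]
              · simp [hki, hkj])
        rw [hf] at hF
        have e1 : ∑ k, (if k = i ∨ k = j then (1:ℝ) else 0) * a k = a i + a j := by
          have hterm : ∀ k, (if k = i ∨ k = j then (1:ℝ) else 0) * a k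
              = (if k = i then a i else 0) + (if k = j then a j else 0) := by
            intro k
            by_cases hki : k = i
            · subst hki; simp [hij]
            · by_cases hkj : k = j
              · subst hkj; simp [hki]
              · simp [hki, hkj]
          rw [Finset.sum_congr rfl fun k _ => hterm k, Finset.sum_add_distrib]
          simp
        have e2 : ∑ k, ((if k = i then r else 0) + (if k = j then -r else 0)) * b k
            = r * (b i - b j) := by
          have hterm : ∀ k, ((if k = i then r else 0) + (if k = j then -r else 0)) * b k
              = (if k = i then r * b i else 0) + (if k = j then -(r * b j) else 0) := by
            intro k
            by_cases hki : k = i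
            · subst hki; simp [hij]
            · by_cases hkj : k = j
              · subst hkj; simp [hki]
              · simp [hki, hkj]
          rw [Finset.sum_congr rfl fun k _ => hterm k, Finset.sum_add_distrib]
          simp
          ring
        rw [e1, e2] at hF
        simpa using hF
      have := linear_coeff_zero key2
      linarith
  rw [hf]
  set s := ∑ i, y i with hs
  set σ := ∑ i, x i with hσdef
  have hσ0 : 0 ≤ σ := Finset.sum_nonneg fun i _ => (hx i).1
  have ht0 : 0 ≤ t := le_trans (sq_nonneg s) h1
  rcases eq_or_lt_of_le hσ0 with hσ | hσ
  · -- σ = 0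
    have hxz : ∀ i, x i = 0 := by
      intro i
      have hz := (Finset.sum_eq_zero_iff_of_nonneg (fun i _ => (hx i).1)).1 hσ.symm
      exact hz i (Finset.mem_univ i)
    have hs0 : s = 0 := by
      have hle : s ^ 2 ≤ 0 := by rw [← hσ, mul_zero] at h2; exact h2
      nlinarith [sq_nonneg s]
    have e1 : ∑ i, x i * a i = 0 := Finset.sum_eq_zero fun i _ => by rw [hxz i, zero_mul]
    have e2 : ∑ i, y i * b i = 0 := by
      rcases isEmpty_or_nonempty (Fin n) with he | he
      · simp
      · obtain ⟨i₀⟩ := he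
        calc ∑ i, y i * b i = ∑ i, y i * b i₀ :=
              Finset.sum_congr rfl fun i _ => by rw [hbconst i i₀]
          _ = s * b i₀ := by rw [hs, Finset.sum_mul]
          _ = 0 := by rw [hs0, zero_mul]
    rw [e1, e2]
    simpa using F0 t ht0
  · -- σ > 0
    have hne : Nonempty (Fin n) := by
      by_contra he
      rw [not_nonempty_iff] at he
      rw [hσdef] at hσ
      simp [Finset.univ_eq_empty] at hσ
    obtain ⟨i₀⟩ := hne
    haveI : Nonempty (Fin n) := ⟨i₀⟩
    have hbs : ∑ i, y i * b i = s * b i₀ := by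
      calc ∑ i, y i * b i = ∑ i, y i * b i₀ :=
            Finset.sum_congr rfl fun i _ => by rw [hbconst i i₀]
        _ = s * b i₀ := by rw [hs, Finset.sum_mul]
    rw [hbs]
    rcases eq_or_lt_of_le hc with hc0 | hcpos
    · -- c = 0
      have hb0 : ∀ i, b i = 0 := by
        intro i
        have key2 : ∀ r : ℝ, u ≤ a i + r * b i := by
          intro r
          have hF := point {i} r i (Finset.mem_singleton_self i)
          rw [Finset.sum_singleton, ← hc0] at hF
          simpa using hF
        exact linear_coeff_zero key2
      set Sneg := Finset.univ.filter (fun i => a i < 0) with hSneg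
      have hp0 := point0 Sneg
      have hbound : ∑ i ∈ Sneg, a i ≤ ∑ i, x i * a i := by
        calc ∑ i ∈ Sneg, a i ≤ ∑ i ∈ Sneg, x i * a i := by
              apply Finset.sum_le_sum
              intro i hi
              have hai : a i < 0 := (Finset.mem_filter.1 hi).2
              nlinarith [(hx i).2]
          _ ≤ ∑ i, x i * a i := by
              apply Finset.sum_le_sum_of_subset_of_nonneg (Finset.subset_univ _)
              intro i _ hi
              have hna : ¬ a i < 0 := fun hlt => hi (Finset.mem_filter.2 ⟨Finset.mem_univ i, hlt⟩)
              exact mul_nonneg (hx i).1 (le_of_not_gt hna)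
      rw [hb0 i₀, ← hc0]
      simp only [mul_zero, add_zero]
      linarith
    · -- c > 0
      set w := min 1 σ with hwdef
      have hw0 : 0 < w := lt_min one_pos hσ
      have hw1 : w ≤ 1 := min_le_left _ _
      have hwσ : w ≤ σ := min_le_right _ _
      have hsw : s ^ 2 ≤ t * w := by
        rcases le_total σ 1 with h | h
        · rw [hwdef, min_eq_right h]; exact h2
        · rw [hwdef, min_eq_left h, mul_one]; exact h1
      obtain ⟨S1, i₁, hi₁, hSbound⟩ :
          ∃ (S1 : Finset (Fin n)) (i₁ : Fin n), i₁ ∈ S1 ∧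
            w * ∑ k ∈ S1, a k ≤ ∑ i, x i * a i := by
        rcases Finset.eq_empty_or_nonempty (Finset.univ.filter fun i => a i < 0) with hS | hS
        · obtain ⟨i₁, -, hmin⟩ := Finset.exists_min_image Finset.univ a Finset.univ_nonempty
          refine ⟨{i₁}, i₁, Finset.mem_singleton_self i₁, ?_⟩
          have hai : 0 ≤ a i₁ := by
            by_contra hcon
            push_neg at hcon
            have hmem : i₁ ∈ Finset.univ.filter fun i => a i < 0 :=
              Finset.mem_filter.2 ⟨Finset.mem_univ _, hcon⟩
            rw [hS] at hmem
            exact absurd hmem (Finset.notMem_empty _)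
          rw [Finset.sum_singleton]
          calc w * a i₁ ≤ σ * a i₁ := mul_le_mul_of_nonneg_right hwσ hai
            _ = ∑ i, x i * a i₁ := by rw [hσdef, Finset.sum_mul]
            _ ≤ ∑ i, x i * a i := Finset.sum_le_sum fun i _ =>
                mul_le_mul_of_nonneg_left (hmin i (Finset.mem_univ i)) (hx i).1
        · obtain ⟨i₁, hi₁⟩ := hS
          refine ⟨_, i₁, hi₁, ?_⟩
          calc w * ∑ k ∈ Finset.univ.filter (fun i => a i < 0), a k
              = ∑ k ∈ Finset.univ.filter (fun i => a i < 0), w * a k := by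
                rw [Finset.mul_sum]
            _ ≤ ∑ k ∈ Finset.univ.filter (fun i => a i < 0), x k * a k := by
                apply Finset.sum_le_sum
                intro k hk
                have hak : a k < 0 := (Finset.mem_filter.1 hk).2
                have hxk : x k ≤ w := le_min (hx k).2
                  (Finset.single_le_sum (fun i _ => (hx i).1) (Finset.mem_univ k))
                exact mul_le_mul_of_nonpos_right hxk (le_of_lt hak)
            _ ≤ ∑ i, x i * a i := by
                apply Finset.sum_le_sum_of_subset_of_nonneg (Finset.subset_univ _)
                intro i _ hi
                have hna : ¬ a i < 0 := fun hlt =>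
                  hi (Finset.mem_filter.2 ⟨Finset.mem_univ i, hlt⟩)
                exact mul_nonneg (hx i).1 (le_of_not_gt hna)
      have hpt := point S1 (s / w) i₁ hi₁
      have hwne : w ≠ 0 := ne_of_gt hw0
      have h5 : w * u ≤ w * ∑ k ∈ S1, a k + (s * b i₁ + (s ^ 2 / w) * c) := by
        have hmul := mul_le_mul_of_nonneg_left hpt (le_of_lt hw0)
        have heq : w * (∑ k ∈ S1, a k + s / w * b i₁ + (s / w) ^ 2 * c)
            = w * ∑ k ∈ S1, a k + (s * b i₁ + (s ^ 2 / w) * c) := by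
          field_simp
          ring
        rw [heq] at hmul
        exact hmul
      have h6 : (s ^ 2 / w) * c ≤ t * c := by
        apply mul_le_mul_of_nonneg_right _ hc
        rw [div_le_iff₀ hw0]
        linarith [hsw]
      have h7 : u ≤ w * u := by nlinarith
      have hbeq : b i₀ = b i₁ := hbconst _ _
      rw [hbeq]
      linarith

/-- rank-one case with free continuous variables.
The closed convex hull of
`X_f = {(x,y,t) ∈ {0,1}^N × ℝ^N × ℝ : (∑ y_i)² ≤ t, y_i(1−x_i) = 0 ∀i}` equals
`{(x,y,t) ∈ [0,1]^N × ℝ^N × ℝ : (∑ y_i)² ≤ t and (∑ y_i)² ≤ t · ∑ x_i}`. -/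
theorem stmt_6 (n : ℕ) :
    closure (convexHull ℝ {p : (Fin n → ℝ) × (Fin n → ℝ) × ℝ |
        (∀ i, p.1 i = 0 ∨ p.1 i = 1) ∧ (∑ i, p.2.1 i) ^ 2 ≤ p.2.2 ∧
        ∀ i, p.2.1 i * (1 - p.1 i) = 0})
      = {p : (Fin n → ℝ) × (Fin n → ℝ) × ℝ |
          (∀ i, 0 ≤ p.1 i ∧ p.1 i ≤ 1) ∧ (∑ i, p.2.1 i) ^ 2 ≤ p.2.2 ∧
          (∑ i, p.2.1 i) ^ 2 ≤ p.2.2 * ∑ i, p.1 i} := by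
  apply Set.Subset.antisymm
  · apply closure_minimal
    · apply convexHull_min
      · -- X ⊆ RHS
        rintro ⟨x, y, t⟩ ⟨hx01, hst, hy⟩
        dsimp only at hx01 hst hy ⊢
        have hxnn : ∀ i, 0 ≤ x i := by
          intro i; rcases hx01 i with h | h <;> rw [h] <;> norm_num
        have ht0 : (0:ℝ) ≤ t := le_trans (sq_nonneg _) hst
        refine ⟨fun i => ?_, hst, ?_⟩
        · rcases hx01 i with h | h <;> simp [h]
        · by_cases hy0 : ∀ i, y i = 0
          · have hys : ∑ i, y i = 0 := Finset.sum_eq_zero fun i _ => hy0 i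
            rw [hys]
            simpa using mul_nonneg ht0 (Finset.sum_nonneg fun i _ => hxnn i)
          · push_neg at hy0
            obtain ⟨i, hyi⟩ := hy0
            have hxi : x i = 1 := by
              rcases mul_eq_zero.1 (hy i) with h | h
              · exact absurd h hyi
              · linarith
            have hσ1 : (1:ℝ) ≤ ∑ i, x i := by
              calc (1:ℝ) = x i := hxi.symm
                _ ≤ ∑ i, x i := Finset.single_le_sum (fun j _ => hxnn j) (Finset.mem_univ i)
            nlinarith [sq_nonneg (∑ i, y i)]
      · -- convexity of RHS
        rintro ⟨x1, y1, t1⟩ ⟨hx1, hs1, hq1⟩ ⟨x2, y2, t2⟩ ⟨hx2, hs2, hq2⟩ α β hα hβ hαβ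
        dsimp only at hx1 hs1 hq1 hx2 hs2 hq2
        have hσ1 : (0:ℝ) ≤ ∑ i, x1 i := Finset.sum_nonneg fun i _ => (hx1 i).1
        have hσ2 : (0:ℝ) ≤ ∑ i, x2 i := Finset.sum_nonneg fun i _ => (hx2 i).1
        have ht1 : (0:ℝ) ≤ t1 := le_trans (sq_nonneg _) hs1
        have ht2 : (0:ℝ) ≤ t2 := le_trans (sq_nonneg _) hs2
        simp only [Prod.smul_mk, Prod.mk_add_mk, Set.mem_setOf_eq, Pi.add_apply,
          Pi.smul_apply, smul_eq_mul]
        have hysum : ∑ i, (α * y1 i + β * y2 i) = α * ∑ i, y1 i + β * ∑ i, y2 i := by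
          rw [Finset.sum_add_distrib, ← Finset.mul_sum, ← Finset.mul_sum]
        have hxsum : ∑ i, (α * x1 i + β * x2 i) = α * ∑ i, x1 i + β * ∑ i, x2 i := by
          rw [Finset.sum_add_distrib, ← Finset.mul_sum, ← Finset.mul_sum]
        set s1 := ∑ i, y1 i
        set s2 := ∑ i, y2 i
        set σ1 := ∑ i, x1 i
        set σ2 := ∑ i, x2 i
        refine ⟨fun i => ?_, ?_, ?_⟩
        · constructor
          · have := mul_nonneg hα (hx1 i).1; have := mul_nonneg hβ (hx2 i).1
            linarith
          · nlinarith [(hx1 i).2, (hx2 i).2, (hx1 i).1, (hx2 i).1]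
        · rw [hysum]
          nlinarith [mul_nonneg (mul_nonneg hα hβ) (sq_nonneg (s1 - s2)),
            mul_le_mul_of_nonneg_left hs1 hα, mul_le_mul_of_nonneg_left hs2 hβ]
        · rw [hysum, hxsum]
          have hss : s1 ^ 2 * s2 ^ 2 ≤ (t1 * σ1) * (t2 * σ2) :=
            mul_le_mul hq1 hq2 (sq_nonneg _) (mul_nonneg ht1 hσ1)
          have hA : (0:ℝ) ≤ t1 * σ2 + t2 * σ1 :=
            add_nonneg (mul_nonneg ht1 hσ2) (mul_nonneg ht2 hσ1)
          have hsq : (2 * s1 * s2) ^ 2 ≤ (t1 * σ2 + t2 * σ1) ^ 2 := by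
            nlinarith [sq_nonneg (t1 * σ2 - t2 * σ1)]
          have h2ss : 2 * s1 * s2 ≤ t1 * σ2 + t2 * σ1 := by nlinarith [hsq, hA]
          nlinarith [mul_le_mul_of_nonneg_left hq1 (sq_nonneg α),
            mul_le_mul_of_nonneg_left hq2 (sq_nonneg β),
            mul_le_mul_of_nonneg_left h2ss (mul_nonneg hα hβ)]
    · -- RHS closed
      have hrw : {p : (Fin n → ℝ) × (Fin n → ℝ) × ℝ |
          (∀ i, 0 ≤ p.1 i ∧ p.1 i ≤ 1) ∧ (∑ i, p.2.1 i) ^ 2 ≤ p.2.2 ∧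
          (∑ i, p.2.1 i) ^ 2 ≤ p.2.2 * ∑ i, p.1 i}
          = (⋂ i, ({p : (Fin n → ℝ) × (Fin n → ℝ) × ℝ | 0 ≤ p.1 i}
              ∩ {p : (Fin n → ℝ) × (Fin n → ℝ) × ℝ | p.1 i ≤ 1}))
            ∩ ({p : (Fin n → ℝ) × (Fin n → ℝ) × ℝ | (∑ i, p.2.1 i) ^ 2 ≤ p.2.2}
              ∩ {p : (Fin n → ℝ) × (Fin n → ℝ) × ℝ |
                  (∑ i, p.2.1 i) ^ 2 ≤ p.2.2 * ∑ i, p.1 i}) := by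
        ext p
        simp only [Set.mem_setOf_eq, Set.mem_inter_iff, Set.mem_iInter]
      rw [hrw]
      have hcy : Continuous fun p : (Fin n → ℝ) × (Fin n → ℝ) × ℝ => (∑ i, p.2.1 i) ^ 2 :=
        (continuous_finset_sum _ fun i _ =>
          (continuous_apply i).comp (continuous_fst.comp continuous_snd)).pow 2
      refine IsClosed.inter (isClosed_iInter fun i => IsClosed.inter ?_ ?_)
        (IsClosed.inter ?_ ?_)
      · exact isClosed_le continuous_const ((continuous_apply i).comp continuous_fst)
      · exact isClosed_le ((continuous_apply i).comp continuous_fst) continuous_const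
      · exact isClosed_le hcy (continuous_snd.comp continuous_snd)
      · exact isClosed_le hcy ((continuous_snd.comp continuous_snd).mul
          (continuous_finset_sum _ fun i _ => (continuous_apply i).comp continuous_fst))
  · -- hard direction
    intro p hp
    by_contra hcl
    obtain ⟨f, u, hfp, hfs⟩ := geometric_hahn_banach_point_closed
      ((convex_convexHull ℝ _).closure) isClosed_closure hcl
    obtain ⟨hp1, hp2, hp3⟩ := hp
    have hX : ∀ x y : Fin n → ℝ, ∀ t : ℝ, (∀ i, x i = 0 ∨ x i = 1) → (∑ i, y i) ^ 2 ≤ t →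
        (∀ i, y i * (1 - x i) = 0) → u ≤ f (x, y, t) := by
      intro x y t hx hst hy
      exact le_of_lt (hfs _ (subset_closure (subset_convexHull ℝ _ ⟨hx, hst, hy⟩)))
    have hkey := key_lemma f u hX p.1 p.2.1 p.2.2 hp1 hp2 hp3
    linarith [hkey, hfp]
end

section
/- Let X₋² = {(x,y,t) ∈ {0,1}² × ℝ₊² × ℝ : (y₁−y₂)² ≤ t and y_i(1−x_i) = 0 for i = 1,2}. Then the closure of the convex hull of X₋² equals the set of (x,y,t) ∈ [0,1]² × ℝ₊² × ℝ₊ such that (y₁−y₂)² ≤ t·x₁ whenever y₁ ≥ y₂, and (y₁−y₂)² ≤ t·x₂ whenever y₂ ≥ y₁. -/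
/-!
The right-hand side contains `X₋²`, is closed, and is convex: `(max u 0)² ≤ t x` with
`t, x ≥ 0` is a convex condition on `(u, t, x)` (a weighted Cauchy–Schwarz inequality), and both
defining inequalities have this form with `u = ±(y₁ - y₂)`. Conversely, swapping the two indices
we may assume `y₂ ≤ y₁`. With `d = y₁ - y₂`, the point `((x₁, x₂), (d, 0), t)` is a genuine convex
combination of points of `X₋²`: for `b ∈ {0, 1}` write `((x₁, b), (d, 0), t)` as
`x₁ • ((1, b), (d / x₁, 0), t / x₁) + (1 - x₁) • ((0, b), 0, 0)`, then interpolate in `x₂`.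
The ray `((1, 1), (s, s), 0)`, `s ≥ 0`, lies in `X₋²`, so the diagonal `(0, (1, 1), 0)` is a
recession direction of the closed convex hull, and adding `y₂` times it gives the original point;
this last step is where the closure is needed.
-/

open Set Filter Topology

lemma max_sq_le_iff {u t x : ℝ} (htx : 0 ≤ t * x) :
    max u 0 ^ 2 ≤ t * x ↔ (0 ≤ u → u ^ 2 ≤ t * x) := by
  rcases le_total 0 u with hu | hu
  · simp [hu]
  · simp only [max_eq_right hu]
    exact ⟨fun _ hu' => by simpa [le_antisymm hu hu'] using htx, fun _ => by simpa using htx⟩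

lemma two_mul_le_of_sq_le_mul {u u' t t' x x' : ℝ} (ht : 0 ≤ t) (ht' : 0 ≤ t')
    (hx : 0 ≤ x) (hx' : 0 ≤ x') (h : u ^ 2 ≤ t * x) (h' : u' ^ 2 ≤ t' * x') :
    2 * (u * u') ≤ t * x' + t' * x := by
  refine le_of_sq_le_sq ?_ (by positivity)
  nlinarith [sq_nonneg (t * x' - t' * x), mul_le_mul h h' (sq_nonneg _) (by positivity)]

lemma add_sq_le_add_mul_add {u u' t t' x x' : ℝ} (ht : 0 ≤ t) (ht' : 0 ≤ t')
    (hx : 0 ≤ x) (hx' : 0 ≤ x') (h : u ^ 2 ≤ t * x) (h' : u' ^ 2 ≤ t' * x') :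
    (u + u') ^ 2 ≤ (t + t') * (x + x') := by
  nlinarith [two_mul_le_of_sq_le_mul ht ht' hx hx' h h']

lemma mul_sq_le_mul_mul_mul {a u t x : ℝ} (h : u ^ 2 ≤ t * x) :
    (a * u) ^ 2 ≤ (a * t) * (a * x) := by
  nlinarith [mul_le_mul_of_nonneg_left h (sq_nonneg a)]

lemma convex_combination_sq_le {a b u u' t t' x x' : ℝ} (ha : 0 ≤ a) (hb : 0 ≤ b)
    (ht : 0 ≤ t) (ht' : 0 ≤ t') (hx : 0 ≤ x) (hx' : 0 ≤ x')
    (h : 0 ≤ u → u ^ 2 ≤ t * x) (h' : 0 ≤ u' → u' ^ 2 ≤ t' * x') (hpos : 0 ≤ a * u + b * u') :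
    (a * u + b * u') ^ 2 ≤ (a * t + b * t') * (a * x + b * x') := by
  have hv := (max_sq_le_iff (mul_nonneg ht hx)).2 h
  have hv' := (max_sq_le_iff (mul_nonneg ht' hx')).2 h'
  calc (a * u + b * u') ^ 2 ≤ (a * max u 0 + b * max u' 0) ^ 2 := by
        gcongr <;> exact le_max_left _ _
    _ ≤ (a * t + b * t') * (a * x + b * x') :=
        add_sq_le_add_mul_add (by positivity) (by positivity) (by positivity) (by positivity)
          (mul_sq_le_mul_mul_mul hv) (mul_sq_le_mul_mul_mul hv')

lemma IsClosed.add_mem_of_convex_of_ray {E : Type*} [AddCommGroup E] [Module ℝ E]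
    [TopologicalSpace E] [IsTopologicalAddGroup E] [ContinuousSMul ℝ E] {C : Set E}
    (hC : IsClosed C) (hconv : Convex ℝ C) {p q v : E} (hp : p ∈ C)
    (hray : ∀ s : ℝ, 0 ≤ s → q + s • v ∈ C) : p + v ∈ C := by
  -- `p + v` is the limit of `(1 - e) • p + e • (q + e⁻¹ • v)` as `e → 0⁺`
  have hcont : Continuous (fun e : ℝ => (1 - e) • p + e • q + v) := by fun_prop
  have hlim : Tendsto (fun e : ℝ => (1 - e) • p + e • q + v) (𝓝[>] 0) (𝓝 (p + v)) := by
    simpa using (hcont.tendsto 0).mono_left nhdsWithin_le_nhds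
  refine hC.mem_of_tendsto hlim ?_
  filter_upwards [Ioo_mem_nhdsGT (zero_lt_one' ℝ)] with e ⟨he0, he1⟩
  convert hconv hp (hray e⁻¹ (inv_nonneg.2 he0.le)) (sub_nonneg.2 he1.le) he0.le
    (sub_add_cancel 1 e) using 1
  rw [smul_add, smul_smul, mul_inv_cancel₀ he0.ne', one_smul, add_assoc]

def rankOneEpigraph : Set ((ℝ × ℝ) × (ℝ × ℝ) × ℝ) := {p |
  (p.1.1 = 0 ∨ p.1.1 = 1) ∧ (p.1.2 = 0 ∨ p.1.2 = 1) ∧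
  0 ≤ p.2.1.1 ∧ 0 ≤ p.2.1.2 ∧ (p.2.1.1 - p.2.1.2) ^ 2 ≤ p.2.2 ∧
  p.2.1.1 * (1 - p.1.1) = 0 ∧ p.2.1.2 * (1 - p.1.2) = 0}

def rankOneEpigraphHull : Set ((ℝ × ℝ) × (ℝ × ℝ) × ℝ) := {p |
  0 ≤ p.1.1 ∧ p.1.1 ≤ 1 ∧ 0 ≤ p.1.2 ∧ p.1.2 ≤ 1 ∧
  0 ≤ p.2.1.1 ∧ 0 ≤ p.2.1.2 ∧ 0 ≤ p.2.2 ∧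
  (p.2.1.2 ≤ p.2.1.1 → (p.2.1.1 - p.2.1.2) ^ 2 ≤ p.2.2 * p.1.1) ∧
  (p.2.1.1 ≤ p.2.1.2 → (p.2.1.1 - p.2.1.2) ^ 2 ≤ p.2.2 * p.1.2)}

lemma rankOneEpigraph_subset_hull : rankOneEpigraph ⊆ rankOneEpigraphHull := by
  rintro ⟨⟨x₁, x₂⟩, ⟨y₁, y₂⟩, t⟩ ⟨hx₁, hx₂, hy₁, hy₂, hq, hc₁, hc₂⟩
  have ht : 0 ≤ t := (sq_nonneg _).trans hq
  refine ⟨by rcases hx₁ with rfl | rfl <;> norm_num, by rcases hx₁ with rfl | rfl <;> norm_num,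
    by rcases hx₂ with rfl | rfl <;> norm_num, by rcases hx₂ with rfl | rfl <;> norm_num,
    hy₁, hy₂, ht, fun hle => ?_, fun hle => ?_⟩
  · rcases hx₁ with rfl | rfl
    · obtain rfl : y₁ = 0 := by simpa using hc₁
      obtain rfl : y₂ = 0 := le_antisymm hle hy₂
      simp
    · simpa using hq
  · rcases hx₂ with rfl | rfl
    · obtain rfl : y₂ = 0 := by simpa using hc₂
      obtain rfl : y₁ = 0 := le_antisymm hle hy₁
      simp
    · simpa using hq

lemma convex_rankOneEpigraphHull : Convex ℝ rankOneEpigraphHull := by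
  rintro ⟨⟨x₁, x₂⟩, ⟨y₁, y₂⟩, t⟩ ⟨hx₁, hx₁', hx₂, hx₂', hy₁, hy₂, ht, hq₁, hq₂⟩
    ⟨⟨x₁', x₂'⟩, ⟨y₁', y₂'⟩, t'⟩ ⟨hz₁, hz₁', hz₂, hz₂', hw₁, hw₂, ht', hr₁, hr₂⟩ a b ha hb hab
  simp only [rankOneEpigraphHull, mem_ofPred_eq, Prod.smul_mk, Prod.mk_add_mk, smul_eq_mul]
  refine ⟨by positivity, by nlinarith, by positivity, by nlinarith, by positivity, by positivity,
    by positivity, fun hle => ?_, fun hle => ?_⟩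
  · have := convex_combination_sq_le ha hb ht ht' hx₁ hz₁
      (u := y₁ - y₂) (u' := y₁' - y₂') (fun h => hq₁ (sub_nonneg.1 h))
      (fun h => hr₁ (sub_nonneg.1 h)) (by linarith)
    convert this using 1; ring
  · have := convex_combination_sq_le ha hb ht ht' hx₂ hz₂
      (u := y₂ - y₁) (u' := y₂' - y₁') (fun h => sub_sq_comm y₁ y₂ ▸ hq₂ (sub_nonneg.1 h))
      (fun h => sub_sq_comm y₁' y₂' ▸ hr₂ (sub_nonneg.1 h)) (by linarith)
    convert this using 1; ring

lemma rankOneEpigraphHull_eq : rankOneEpigraphHull = {p |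
    0 ≤ p.1.1 ∧ p.1.1 ≤ 1 ∧ 0 ≤ p.1.2 ∧ p.1.2 ≤ 1 ∧
    0 ≤ p.2.1.1 ∧ 0 ≤ p.2.1.2 ∧ 0 ≤ p.2.2 ∧
    max (p.2.1.1 - p.2.1.2) 0 ^ 2 ≤ p.2.2 * p.1.1 ∧
    max (p.2.1.2 - p.2.1.1) 0 ^ 2 ≤ p.2.2 * p.1.2} := by
  ext ⟨⟨x₁, x₂⟩, ⟨y₁, y₂⟩, t⟩
  simp only [rankOneEpigraphHull, mem_ofPred_eq]
  refine and_congr_right fun hx₁ => and_congr_right fun _ => and_congr_right fun hx₂ =>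
    and_congr_right fun _ => and_congr_right fun _ => and_congr_right fun _ =>
    and_congr_right fun ht => ?_
  rw [max_sq_le_iff (mul_nonneg ht hx₁), max_sq_le_iff (mul_nonneg ht hx₂), sub_sq_comm y₂,
    sub_nonneg, sub_nonneg]

lemma isClosed_rankOneEpigraphHull : IsClosed rankOneEpigraphHull := by
  rw [rankOneEpigraphHull_eq]
  simp only [ofPred_and]
  repeat' apply IsClosed.inter
  all_goals exact isClosed_le (by fun_prop) (by fun_prop)

lemma mem_convexHull_rankOneEpigraph {x₁ x₂ d t : ℝ} (hx₁ : 0 ≤ x₁) (hx₁' : x₁ ≤ 1)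
    (hx₂ : 0 ≤ x₂) (hx₂' : x₂ ≤ 1) (hd : 0 ≤ d) (ht : 0 ≤ t) (h : d ^ 2 ≤ t * x₁) :
    ((x₁, x₂), (d, 0), t) ∈ convexHull ℝ rankOneEpigraph := by
  have hvert : ∀ b : ℝ, (b = 0 ∨ b = 1) → ((x₁, b), (d, 0), t) ∈ convexHull ℝ rankOneEpigraph := by
    intro b hb
    rcases hx₁.eq_or_lt with rfl | hpos
    · obtain rfl : d = 0 := by nlinarith
      exact subset_convexHull ℝ _
        ⟨Or.inl rfl, hb, le_rfl, le_rfl, by simpa using ht, by ring, by ring⟩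
    have hA : ((1, b), (d / x₁, 0), t / x₁) ∈ rankOneEpigraph := by
      refine ⟨Or.inr rfl, hb, by positivity, le_rfl, ?_, by ring, by ring⟩
      rw [sub_zero, div_pow, div_le_div_iff₀ (by positivity) hpos]
      nlinarith
    have hB : ((0, b), (0, 0), 0) ∈ rankOneEpigraph :=
      ⟨Or.inl rfl, hb, le_rfl, le_rfl, by norm_num, by ring, by ring⟩
    convert convex_convexHull ℝ _ (subset_convexHull ℝ _ hA) (subset_convexHull ℝ _ hB) hx₁
      (sub_nonneg.2 hx₁') (add_sub_cancel x₁ 1) using 1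
    simp [field]
  simpa using (convex_convexHull ℝ rankOneEpigraph).add_smul_mem (hvert 0 (Or.inl rfl))
    (y := ((0, 1), (0, 0), 0)) (by simpa using hvert 1 (Or.inr rfl)) ⟨hx₂, hx₂'⟩

lemma mem_closure_convexHull_rankOneEpigraph {x₁ x₂ y₁ y₂ t : ℝ} (hx₁ : 0 ≤ x₁) (hx₁' : x₁ ≤ 1)
    (hx₂ : 0 ≤ x₂) (hx₂' : x₂ ≤ 1) (hy₂ : 0 ≤ y₂) (ht : 0 ≤ t) (hle : y₂ ≤ y₁)
    (h : (y₁ - y₂) ^ 2 ≤ t * x₁) :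
    ((x₁, x₂), (y₁, y₂), t) ∈ closure (convexHull ℝ rankOneEpigraph) := by
  have hray : ∀ s : ℝ, 0 ≤ s → ((1, 1), (0, 0), 0) + s • ((0, 0), (y₂, y₂), 0) ∈
      closure (convexHull ℝ rankOneEpigraph) := fun s hs =>
    subset_closure <| subset_convexHull ℝ _ <| by simp [rankOneEpigraph, mul_nonneg hs hy₂]
  convert isClosed_closure.add_mem_of_convex_of_ray (convex_convexHull ℝ _).closure
    (subset_closure (mem_convexHull_rankOneEpigraph hx₁ hx₁' hx₂ hx₂' (sub_nonneg.2 hle) ht h))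
    hray using 1
  simp

def coordSwap (p : (ℝ × ℝ) × (ℝ × ℝ) × ℝ) : (ℝ × ℝ) × (ℝ × ℝ) × ℝ :=
  ((p.1.2, p.1.1), (p.2.1.2, p.2.1.1), p.2.2)

lemma coordSwap_mem_closure_convexHull {p : (ℝ × ℝ) × (ℝ × ℝ) × ℝ}
    (hp : p ∈ closure (convexHull ℝ rankOneEpigraph)) :
    coordSwap p ∈ closure (convexHull ℝ rankOneEpigraph) := by
  have hlin : IsLinearMap ℝ coordSwap := ⟨fun _ _ => rfl, fun _ _ => rfl⟩
  refine map_mem_closure (by unfold coordSwap; fun_prop) hp (mapsTo_iff_image_subset.2 ?_)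
  rw [hlin.image_convexHull]
  refine convexHull_mono ?_
  rintro _ ⟨⟨⟨x₁, x₂⟩, ⟨y₁, y₂⟩, t⟩, ⟨hx₁, hx₂, hy₁, hy₂, hq, hc₁, hc₂⟩, rfl⟩
  exact ⟨hx₂, hx₁, hy₂, hy₁, sub_sq_comm y₁ y₂ ▸ hq, hc₂, hc₁⟩

/-- two-variable rank-one case with a negative off-diagonal.
The closed convex hull of
`X₋² = {(x,y,t) ∈ {0,1}² × ℝ₊² × ℝ : (y₁−y₂)² ≤ t, y_i(1−x_i) = 0}` equals the set of
`(x,y,t) ∈ [0,1]² × ℝ₊² × ℝ₊` with `(y₁−y₂)² ≤ t·x₁` whenever `y₁ ≥ y₂` and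
`(y₁−y₂)² ≤ t·x₂` whenever `y₂ ≥ y₁`. -/
theorem stmt_7 :
    closure (convexHull ℝ {p : (ℝ × ℝ) × (ℝ × ℝ) × ℝ |
        (p.1.1 = 0 ∨ p.1.1 = 1) ∧ (p.1.2 = 0 ∨ p.1.2 = 1) ∧
        0 ≤ p.2.1.1 ∧ 0 ≤ p.2.1.2 ∧ (p.2.1.1 - p.2.1.2) ^ 2 ≤ p.2.2 ∧
        p.2.1.1 * (1 - p.1.1) = 0 ∧ p.2.1.2 * (1 - p.1.2) = 0})
      = {p : (ℝ × ℝ) × (ℝ × ℝ) × ℝ |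
          0 ≤ p.1.1 ∧ p.1.1 ≤ 1 ∧ 0 ≤ p.1.2 ∧ p.1.2 ≤ 1 ∧
          0 ≤ p.2.1.1 ∧ 0 ≤ p.2.1.2 ∧ 0 ≤ p.2.2 ∧
          (p.2.1.2 ≤ p.2.1.1 → (p.2.1.1 - p.2.1.2) ^ 2 ≤ p.2.2 * p.1.1) ∧
          (p.2.1.1 ≤ p.2.1.2 → (p.2.1.1 - p.2.1.2) ^ 2 ≤ p.2.2 * p.1.2)} := by
  change closure (convexHull ℝ rankOneEpigraph) = rankOneEpigraphHull
  refine (closure_minimal (convexHull_min rankOneEpigraph_subset_hull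
    convex_rankOneEpigraphHull) isClosed_rankOneEpigraphHull).antisymm ?_
  rintro ⟨⟨x₁, x₂⟩, ⟨y₁, y₂⟩, t⟩ ⟨hx₁, hx₁', hx₂, hx₂', hy₁, hy₂, ht, hq₁, hq₂⟩
  rcases le_total y₂ y₁ with hle | hle
  · exact mem_closure_convexHull_rankOneEpigraph hx₁ hx₁' hx₂ hx₂' hy₂ ht hle (hq₁ hle)
  · exact coordSwap_mem_closure_convexHull <| mem_closure_convexHull_rankOneEpigraph
      hx₂ hx₂' hx₁ hx₁' hy₁ ht hle (sub_sq_comm y₁ y₂ ▸ hq₂ hle)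
end

section
/- Let S be a nonempty finite set and α ∈ ℝ^S. Then the infimum over y ∈ ℝ₊^S of −Σ_{i∈S} α_i y_i + (Σ_{i∈S} y_i)² equals −(max{0, max_{i∈S} α_i})²/4, and this infimum is attained (e.g., by putting all mass on a coordinate maximizing α and equal to max{0, max α}/2). -/
open Finset

/-- For a nonempty finite set `S` and `α ∈ ℝ^S`, the infimum over
`y ∈ ℝ₊^S` of `−∑ α_i y_i + (∑ y_i)²` equals `−(max{0, max_i α_i})²/4`, and the
infimum is attained. -/
theorem stmt_8 {ι : Type*} [Fintype ι] [Nonempty ι] (α : ι → ℝ) :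
    IsLeast {v : ℝ | ∃ y : ι → ℝ, (∀ i, 0 ≤ y i) ∧
        v = -(∑ i, α i * y i) + (∑ i, y i) ^ 2}
      (-(max 0 (Finset.univ.sup' Finset.univ_nonempty α)) ^ 2 / 4) := by
  classical
  set M : ℝ := max 0 (Finset.univ.sup' Finset.univ_nonempty α) with hM
  have hM0 : 0 ≤ M := le_max_left _ _
  constructor
  · obtain ⟨i₀, -, hi₀⟩ := Finset.exists_mem_eq_sup' Finset.univ_nonempty α
    refine ⟨fun i => if i = i₀ then M / 2 else 0, fun i => by positivity, ?_⟩
    have hsum : (∑ i, (if i = i₀ then M / 2 else 0 : ℝ)) = M / 2 := by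
      simp [Finset.sum_ite_eq']
    have hsum2 : (∑ i, α i * (if i = i₀ then M / 2 else 0 : ℝ)) = α i₀ * (M / 2) := by
      rw [Finset.sum_eq_single i₀] <;> simp (config := {contextual := true})
    rw [hsum, hsum2]
    have hαM : α i₀ * M = M * M := by
      rcases le_or_gt M 0 with h | h
      · have : M = 0 := le_antisymm h hM0
        simp [this]
      · have : M = α i₀ := by
          have : Finset.univ.sup' Finset.univ_nonempty α = M := by
            rcases max_cases (0:ℝ) (Finset.univ.sup' Finset.univ_nonempty α) with ⟨h1, h2⟩ | ⟨h1, h2⟩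
            · exfalso; rw [hM] at h; linarith [h1]
            · exact h1.symm
          rw [← this, hi₀]
        rw [← this]
    nlinarith [hαM]
  · rintro v ⟨y, hy, rfl⟩
    have hαle : ∀ i, α i ≤ M := fun i =>
      le_trans (Finset.le_sup' α (Finset.mem_univ i)) (le_max_right _ _)
    have h1 : ∑ i, α i * y i ≤ M * ∑ i, y i := by
      rw [Finset.mul_sum]
      exact Finset.sum_le_sum fun i _ => mul_le_mul_of_nonneg_right (hαle i) (hy i)
    nlinarith [sq_nonneg (∑ i, y i - M / 2)]
end

section
/- Let S⁺ and S⁻ be disjoint nonempty finite sets and α ∈ ℝ^{S⁺∪S⁻}. Then the function y ↦ −Σ_{i∈S⁺∪S⁻} α_i y_i + (Σ_{i∈S⁺} y_i − Σ_{j∈S⁻} y_j)² is bounded below on ℝ₊^{S⁺∪S⁻} if and only if max_{i∈S⁺} α_i + max_{j∈S⁻} α_j ≤ 0. -/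
open Finset

/-- boundedness characterization.
For disjoint nonempty finite sets `S⁺, S⁻` (covering the ground set) and
`α ∈ ℝ^{S⁺∪S⁻}`, the function `y ↦ −∑ α_i y_i + (y(S⁺) − y(S⁻))²` is bounded below on
`ℝ₊^{S⁺∪S⁻}` if and only if `max_{S⁺} α + max_{S⁻} α ≤ 0`. -/
theorem stmt_9 {ι : Type*} [Fintype ι] [DecidableEq ι] (Sp Sm : Finset ι)
    (hdisj : Disjoint Sp Sm) (hunion : Sp ∪ Sm = Finset.univ)
    (hSp : Sp.Nonempty) (hSm : Sm.Nonempty) (α : ι → ℝ) :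
    BddBelow {v : ℝ | ∃ y : ι → ℝ, (∀ i, 0 ≤ y i) ∧
        v = -(∑ i, α i * y i) + ((∑ i ∈ Sp, y i) - (∑ i ∈ Sm, y i)) ^ 2}
      ↔ Sp.sup' hSp α + Sm.sup' hSm α ≤ 0 := by
  constructor
  · rintro ⟨c, hc⟩
    by_contra h
    push_neg at h
    obtain ⟨i, hi, hie⟩ := Sp.exists_mem_eq_sup' hSp α
    obtain ⟨j, hj, hje⟩ := Sm.exists_mem_eq_sup' hSm α
    have hij : i ≠ j := fun e => (Finset.disjoint_left.mp hdisj hi) (e ▸ hj)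
    have hjp : j ∉ Sp := Finset.disjoint_right.mp hdisj hj
    have him : i ∉ Sm := Finset.disjoint_left.mp hdisj hi
    have hspos : 0 < α i + α j := by rw [← hie, ← hje]; exact h
    set t : ℝ := (|c| + 1) / (α i + α j) with ht
    have htpos : 0 < t := div_pos (by positivity) hspos
    set y : ι → ℝ := fun k => t * (if k = i then 1 else 0) + t * (if k = j then 1 else 0)
      with hy
    have hyn : ∀ k, 0 ≤ y k := by
      intro k
      have : (0:ℝ) ≤ (if k = i then (1:ℝ) else 0) := by positivity
      have : (0:ℝ) ≤ (if k = j then (1:ℝ) else 0) := by positivity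
      simp only [hy]
      positivity
    have hsum1 : ∑ k ∈ Sp, y k = t := by
      simp only [hy, mul_ite, mul_one, mul_zero, Finset.sum_add_distrib,
        Finset.sum_ite_eq', hi, if_pos, hjp, if_neg, if_false, add_zero]
    have hsum2 : ∑ k ∈ Sm, y k = t := by
      simp only [hy, mul_ite, mul_one, mul_zero, Finset.sum_add_distrib,
        Finset.sum_ite_eq', hj, if_pos, him, if_neg, if_false, zero_add]
    have hsum3 : ∑ k, α k * y k = t * (α i + α j) := by
      simp only [hy, mul_add, mul_ite, mul_one, mul_zero, Finset.sum_add_distrib,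
        Finset.sum_ite_eq', Finset.mem_univ, if_pos]
      ring
    have hmem : -(|c| + 1) ∈ {v : ℝ | ∃ y : ι → ℝ, (∀ i, 0 ≤ y i) ∧
        v = -(∑ i, α i * y i) + ((∑ i ∈ Sp, y i) - (∑ i ∈ Sm, y i)) ^ 2} := by
      refine ⟨y, hyn, ?_⟩
      rw [hsum1, hsum2, hsum3, ht, div_mul_cancel₀ _ (ne_of_gt hspos)]
      ring
    have := hc hmem
    have hca : -|c| ≤ c := neg_abs_le c
    linarith
  · intro h
    refine ⟨-(Sp.sup' hSp α)^2/4, ?_⟩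
    rintro v ⟨y, hy, rfl⟩
    set Mp := Sp.sup' hSp α with hMp
    set Mm := Sm.sup' hSm α with hMm
    have htn : 0 ≤ ∑ i ∈ Sp, y i := Finset.sum_nonneg fun i _ => hy i
    have hsn : 0 ≤ ∑ i ∈ Sm, y i := Finset.sum_nonneg fun i _ => hy i
    have hsplit : ∑ i, α i * y i = ∑ i ∈ Sp, α i * y i + ∑ i ∈ Sm, α i * y i := by
      rw [← Finset.sum_union hdisj, hunion]
    have h1 : ∑ i ∈ Sp, α i * y i ≤ Mp * ∑ i ∈ Sp, y i := by
      rw [Finset.mul_sum]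
      exact Finset.sum_le_sum fun i hi => mul_le_mul_of_nonneg_right (Finset.le_sup' α hi) (hy i)
    have h2 : ∑ i ∈ Sm, α i * y i ≤ Mm * ∑ i ∈ Sm, y i := by
      rw [Finset.mul_sum]
      exact Finset.sum_le_sum fun i hi => mul_le_mul_of_nonneg_right (Finset.le_sup' α hi) (hy i)
    have hkey : 0 ≤ -(Mp + Mm) * ∑ i ∈ Sm, y i :=
      mul_nonneg (by linarith) hsn
    nlinarith [sq_nonneg ((∑ i ∈ Sp, y i) - (∑ i ∈ Sm, y i) - Mp/2)]
end

section
/- Let N be a finite set partitioned as N = N⁺ ∪ N⁻, and let α ∈ ℝ^N satisfy α_i ≥ 0 for all i ∈ N⁺. Define the set function g_α : 2^N → ℝ by g_α(S) = −(max_{i ∈ S∩N⁺} α_i)²/4, with the convention that the maximum over the empty set is 0. Then g_α is monotone nonincreasing (g_α(T) ≤ g_α(S) whenever S ⊆ T) and supermodular. -/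
open Finset

noncomputable section

/-- `m_α(S) = max_{i ∈ S} α_i`, with the convention that the max over `∅` is `0`
(folding `max` starting at `0`; this agrees with the paper's convention since the
relevant coefficients are nonnegative). -/
def maxAlpha {ι : Type*} (α : ι → ℝ) (S : Finset ι) : ℝ := S.fold max 0 α

lemma maxAlpha_nonneg {ι : Type*} (α : ι → ℝ) (S : Finset ι) : 0 ≤ maxAlpha α S := by
  unfold maxAlpha
  rw [Finset.le_fold_max]
  exact Or.inl le_rfl

lemma maxAlpha_mono {ι : Type*} (α : ι → ℝ) {S T : Finset ι} (h : S ⊆ T) :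
    maxAlpha α S ≤ maxAlpha α T := by
  unfold maxAlpha
  rw [Finset.fold_max_le]
  refine ⟨by rw [Finset.le_fold_max]; exact Or.inl le_rfl, fun x hx => ?_⟩
  rw [Finset.le_fold_max]
  exact Or.inr ⟨x, h hx, le_rfl⟩

lemma maxAlpha_insert {ι : Type*} [DecidableEq ι] (α : ι → ℝ) (i : ι) (S : Finset ι) :
    maxAlpha α (insert i S) = max (α i) (maxAlpha α S) := by
  unfold maxAlpha
  exact Finset.fold_insert_idem

/-- key scalar inequality -/
lemma key {a s t : ℝ} (hs : 0 ≤ s) (hst : s ≤ t) :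
    (max a t) ^ 2 - t ^ 2 ≤ (max a s) ^ 2 - s ^ 2 := by
  rcases le_total a t with h | h
  · rw [max_eq_right h]
    have : s ≤ max a s := le_max_right a s
    nlinarith [sq_nonneg (max a s - s)]
  · rw [max_eq_left h]
    rw [max_eq_left (hst.trans h)]
    nlinarith

/-- Let `N = N⁺ ∪ N⁻` be a partition and `α` nonnegative on `N⁺`.
The set function `g_α(S) = −(max_{i ∈ S ∩ N⁺} α_i)²/4` (max over `∅` equal to `0`)
is monotone nonincreasing and supermodular. -/
theorem stmt_11 {ι : Type*} [Fintype ι] [DecidableEq ι] (Np Nm : Finset ι)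
    (hdisj : Disjoint Np Nm) (hunion : Np ∪ Nm = Finset.univ)
    (α : ι → ℝ) (hα : ∀ i ∈ Np, 0 ≤ α i) :
    (∀ S T : Finset ι, S ⊆ T →
      -(maxAlpha α (T ∩ Np)) ^ 2 / 4 ≤ -(maxAlpha α (S ∩ Np)) ^ 2 / 4)
    ∧ (∀ (i : ι) (S T : Finset ι), S ⊆ T → i ∉ T →
      (-(maxAlpha α ((insert i S) ∩ Np)) ^ 2 / 4 - (-(maxAlpha α (S ∩ Np)) ^ 2 / 4)) ≤
      (-(maxAlpha α ((insert i T) ∩ Np)) ^ 2 / 4 - (-(maxAlpha α (T ∩ Np)) ^ 2 / 4))) := by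
  constructor
  · intro S T hST
    have h1 := maxAlpha_mono α (Finset.inter_subset_inter hST (le_refl Np))
    have h2 := maxAlpha_nonneg α (S ∩ Np)
    nlinarith
  · intro i S T hST hiT
    by_cases hi : i ∈ Np
    · have hS : (insert i S) ∩ Np = insert i (S ∩ Np) := by
        rw [Finset.insert_inter_of_mem hi]
      have hT : (insert i T) ∩ Np = insert i (T ∩ Np) := by
        rw [Finset.insert_inter_of_mem hi]
      rw [hS, hT, maxAlpha_insert, maxAlpha_insert]
      have h1 := maxAlpha_mono α (Finset.inter_subset_inter hST (le_refl Np))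
      have h2 := maxAlpha_nonneg α (S ∩ Np)
      have hk := key (a := α i) h2 h1
      linarith
    · rw [Finset.insert_inter_of_notMem hi, Finset.insert_inter_of_notMem hi]
      simp

end
end

section
/- Let N be a finite set and (x,y) ∈ [0,1]^N × ℝ₊^N. Define Ψ(x,y) = sup over S ⊆ N and α ∈ ℝ₊^N of [ −m_α(S)²/4 − Σ_{i ∈ N\S} max(α_i² − m_α(S)², 0)·x_i/4 + Σ_{i∈N} α_i y_i ]. Then there exists a (possibly empty) set L ⊆ N such that (a) x(N\L) ≤ 1; (b) y(L)/(1−x(N\L)) < y_i/x_i for all i ∈ N\L; (c) y(L)/(1−x(N\L)) ≥ y_i/x_i for all i ∈ L; and Ψ(x,y) = y(L)²/(1−x(N\L)) + Σ_{i ∈ N\L} y_i²/x_i. -/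
/-!
Put `s = m_α(S) / 2`. The penalty vanishes on `S`, so the objective is at most `-s² + ∑ᵢ gᵢ(s)`,
where `gᵢ(s) = 2 s yᵢ + (yᵢ - s xᵢ)₊² / xᵢ` is the supremum of the `i`-th term over `αᵢ ≥ 0`.
As `d/ds (-s² + ∑ᵢ gᵢ(s)) = -2 (s - ∑ᵢ min (s xᵢ) yᵢ)`, this is maximised at the largest zero `t`
of `s ↦ s - ∑ᵢ min (s xᵢ) yᵢ`. With `L = {i | yᵢ ≤ t xᵢ}` one gets `y(L) = t (1 - x(N \ L))` and
`1 - x(N \ L) > 0`, and the maximum `t² (1 - x(N \ L)) + ∑_{i ∉ L} yᵢ² / xᵢ` is attained with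
`S = L`. If some `xᵢ = 0 < yᵢ`, both sides are `⊤`.
-/

open Finset

noncomputable section

variable {ι : Type*}

/-- Extended-real ratio with the conventions `a/0 = +∞` for `a > 0` and `0/0 = 0`
(and `a/0 = −∞` for `a < 0`, which never occurs in the statements below). -/
def ratio (a b : ℝ) : EReal :=
  if b = 0 then (if 0 < a then (⊤ : EReal) else if a < 0 then (⊥ : EReal) else (0 : EReal))
  else ((a / b : ℝ) : EReal)

/-- `m_α(S) = max_{i ∈ S} α_i` with the convention `m_α(∅) = 0`. -/
def mAlpha (α : ι → ℝ) (S : Finset ι) : ℝ := S.fold max 0 α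

/-- The maximum lifting function for `X₊`:
`Ψ(x,y) = sup_{S ⊆ N, α ∈ ℝ₊^N} [−m_α(S)²/4 − ∑_{i∈N\S} (α_i²−m_α(S)²)₊ x_i/4 + α·y]`. -/
def Psi [Fintype ι] [DecidableEq ι] (x y : ι → ℝ) : EReal :=
  ⨆ (S : Finset ι) (α : ι → ℝ) (_ : ∀ i, 0 ≤ α i),
    ((-(mAlpha α S) ^ 2 / 4
      - (∑ i ∈ Finset.univ \ S, max ((α i) ^ 2 - (mAlpha α S) ^ 2) 0 * x i / 4)
      + ∑ i, α i * y i : ℝ) : EReal)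

namespace EReal

theorem coe_finset_sum {κ : Type*} (s : Finset κ) (f : κ → ℝ) :
    ((∑ i ∈ s, f i : ℝ) : EReal) = ∑ i ∈ s, (f i : EReal) :=
  map_sum (⟨⟨Real.toEReal, coe_zero⟩, coe_add⟩ : ℝ →+ EReal) f s

theorem sum_eq_top_of_mem {κ : Type*} {s : Finset κ} {f : κ → EReal} {i : κ}
    (hf : ∀ j ∈ s, 0 ≤ f j) (hi : i ∈ s) (htop : f i = ⊤) : ∑ j ∈ s, f j = ⊤ :=
  top_le_iff.1 (htop ▸ single_le_sum hf hi)

end EReal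

section Ratio

variable {a b t : ℝ}

theorem ratio_of_ne_zero (hb : b ≠ 0) : ratio a b = ((a / b : ℝ) : EReal) := if_neg hb

theorem ratio_zero_right (ha : 0 < a) : ratio a 0 = ⊤ := by
  simp [ratio, ha]

theorem ratio_nonneg (ha : 0 ≤ a) (hb : 0 ≤ b) : 0 ≤ ratio a b := by
  rcases hb.eq_or_lt with rfl | hb
  · rcases ha.eq_or_lt with rfl | ha
    · simp [ratio]
    · simp [ratio_zero_right ha]
  · rw [ratio_of_ne_zero hb.ne']
    exact EReal.coe_nonneg.2 (by positivity)

theorem coe_lt_ratio (hb : 0 ≤ b) (h : t * b < a) : (t : EReal) < ratio a b := by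
  rcases hb.eq_or_lt with rfl | hb
  · rw [ratio_zero_right (by simpa using h)]
    exact EReal.coe_lt_top t
  · rw [ratio_of_ne_zero hb.ne']
    exact EReal.coe_lt_coe_iff.2 ((lt_div_iff₀ hb).2 h)

theorem ratio_le_coe (ha : 0 ≤ a) (hb : 0 ≤ b) (ht : 0 ≤ t) (h : a ≤ t * b) :
    ratio a b ≤ t := by
  rcases hb.eq_or_lt with rfl | hb
  · obtain rfl : a = 0 := le_antisymm (by simpa using h) ha
    simpa [ratio] using ht
  · rw [ratio_of_ne_zero hb.ne']
    exact EReal.coe_le_coe_iff.2 ((div_le_iff₀ hb).2 h)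

end Ratio

section MAlpha

variable (α : ι → ℝ) (S : Finset ι)

theorem mAlpha_nonneg : 0 ≤ mAlpha α S :=
  Finset.le_fold_max _ |>.2 (Or.inl le_rfl)

theorem le_mAlpha {i : ι} (hi : i ∈ S) : α i ≤ mAlpha α S :=
  Finset.le_fold_max _ |>.2 (Or.inr ⟨i, hi, le_rfl⟩)

theorem mAlpha_le {c : ℝ} (hc : 0 ≤ c) (h : ∀ i ∈ S, α i ≤ c) : mAlpha α S ≤ c :=
  Finset.fold_max_le _ |>.2 ⟨hc, h⟩

end MAlpha

/-- The supremum over `a ≥ 0` of `a y - (a² - (2s)²)₊ x / 4`, attained at `a = 2s` when `y ≤ s x`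
and at `a = 2y/x` otherwise. -/
def coordGain (x y s : ℝ) : ℝ := 2 * s * y + max (y - s * x) 0 ^ 2 / x

section CoordGain

variable {x y s t : ℝ}

theorem coordGain_of_le (h : y ≤ s * x) : coordGain x y s = 2 * s * y := by
  simp [coordGain, max_eq_right (sub_nonpos.2 h)]

theorem coordGain_of_lt (hx : 0 < x) (h : s * x < y) :
    coordGain x y s = y ^ 2 / x + s ^ 2 * x := by
  rw [coordGain, max_eq_left (sub_pos.2 h).le]
  field_simp
  ring

theorem coordGain_le (hx : 0 < x) :
    coordGain x y s ≤ y ^ 2 / x + s ^ 2 * x := by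
  rcases le_or_gt y (s * x) with h | h
  · rw [coordGain_of_le h, div_add' _ _ _ hx.ne', le_div_iff₀ hx]
    nlinarith [sq_nonneg (y - s * x)]
  · exact (coordGain_of_lt hx h).le

theorem mul_sub_penalty_le_coordGain (hx : 0 ≤ x) (hy : 0 ≤ y) (hxy : x = 0 → y = 0)
    {a : ℝ} (ha : 0 ≤ a) (hs : 0 ≤ s) :
    a * y - max (a ^ 2 - (2 * s) ^ 2) 0 * x / 4 ≤ coordGain x y s := by
  rcases hx.eq_or_lt with rfl | hx
  · simp [coordGain, hxy rfl]
  rcases le_or_gt a (2 * s) with has | has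
  · have : 2 * s * y ≤ coordGain x y s := le_add_of_nonneg_right (by positivity)
    rw [max_eq_right (by nlinarith)]
    nlinarith
  rw [max_eq_left (by nlinarith)]
  rcases le_or_gt y (s * x) with h | h
  · rw [coordGain_of_le h]
    nlinarith [mul_nonneg (sub_nonneg.2 has.le) (show 0 ≤ (a + 2 * s) * x / 4 - y by nlinarith)]
  · rw [coordGain_of_lt hx h]
    have : 0 ≤ (y - a * x / 2) ^ 2 / x := by positivity
    field_simp at this ⊢
    nlinarith

theorem mul_sub_penalty_eq_coordGain (hx : 0 < x) (hs : 0 ≤ s) (h : s * x < y) :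
    2 * y / x * y - max ((2 * y / x) ^ 2 - (2 * s) ^ 2) 0 * x / 4 = coordGain x y s := by
  have hsq : (2 * s) ^ 2 ≤ (2 * y / x) ^ 2 := by
    rw [div_pow, le_div_iff₀ (by positivity)]
    nlinarith [mul_pos (sub_pos.2 h) (show 0 < y + s * x by nlinarith)]
  rw [max_eq_left (sub_nonneg.2 hsq), coordGain_of_lt hx h]
  field_simp
  ring

theorem coordGain_mul_le (hx : 0 ≤ x) (hy : 0 ≤ y) (hs : 0 ≤ s) (h : y ≤ t * x) :
    coordGain x y s * t ≤ (s ^ 2 + t ^ 2) * y := by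
  rcases le_or_gt y (s * x) with hsy | hsy
  · rw [coordGain_of_le hsy]
    nlinarith [sq_nonneg (s - t)]
  · have hx : 0 < x := by
      refine hx.lt_of_ne fun h0 => ?_
      subst h0
      simp only [mul_zero] at hsy h
      linarith
    have hst : s < t := lt_of_mul_lt_mul_right (hsy.trans_le h) hx.le
    rw [coordGain_of_lt hx hsy, div_add' _ _ _ hx.ne', div_mul_eq_mul_div, div_le_iff₀ hx]
    nlinarith [mul_nonneg (sub_nonneg.2 h) (sub_nonneg.2 (show s * s * x ≤ t * y by nlinarith))]

end CoordGain

section Threshold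

variable [Fintype ι] [DecidableEq ι]

structure IsThreshold (x y : ι → ℝ) (t : ℝ) (L : Finset ι) : Prop where
  nonneg : 0 ≤ t
  mem_iff : ∀ i, i ∈ L ↔ y i ≤ t * x i
  slack_pos : 0 < 1 - ∑ i ∈ univ \ L, x i
  sum_eq : ∑ i ∈ L, y i = t * (1 - ∑ i ∈ univ \ L, x i)

variable {x y : ι → ℝ}

theorem sub_sum_min_eq {L : Finset ι} {s : ℝ} (hin : ∀ i ∈ L, y i ≤ s * x i)
    (hout : ∀ i ∈ univ \ L, s * x i ≤ y i) :
    s - ∑ i, min (s * x i) (y i) = s * (1 - ∑ i ∈ univ \ L, x i) - ∑ i ∈ L, y i := by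
  rw [← sum_sdiff (subset_univ L), sum_congr rfl fun i hi => min_eq_right (hin i hi),
    sum_congr rfl fun i hi => min_eq_left (hout i hi), ← mul_sum]
  ring

open Filter Topology in
/-- `t` is the largest zero of `G s = s - ∑ᵢ min (s xᵢ) yᵢ`, which exists as `G 0 = 0` and
`G s ≥ s - y(N)`. Just right of `t`, `G s = s (1 - x(N \ L)) - y(L)` is positive, which forces
both `1 - x(N \ L) > 0` and, by continuity, `G t = 0`. -/
theorem IsThreshold.exists (hx : ∀ i, 0 ≤ x i) (hy : ∀ i, 0 ≤ y i) :
    ∃ t L, IsThreshold x y t L := by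
  set G : ℝ → ℝ := fun s => s - ∑ i, min (s * x i) (y i)
  have hGc : Continuous G := by fun_prop
  have hG0 : G 0 = 0 := by simp [G, hy]
  have hbound : ∀ s, G s ≤ 0 → s ≤ ∑ i, y i := fun s hs =>
    (sub_nonpos.1 hs).trans (sum_le_sum fun i _ => min_le_right _ _)
  obtain ⟨t, ⟨⟨ht, -⟩, hGt_nonpos⟩, htmax⟩ :=
    (isCompact_Icc.inter_right (isClosed_le hGc continuous_const)).exists_isGreatest
      ⟨0, ⟨le_rfl, hbound 0 hG0.le⟩, hG0.le⟩
  have hpos : ∀ s, t < s → 0 < G s := fun s hts => by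
    by_contra! hs
    exact hts.not_ge (htmax ⟨⟨ht.trans hts.le, hbound s hs⟩, hs⟩)
  set L := univ.filter fun i => y i ≤ t * x i
  have hmem : ∀ i, i ∈ L ↔ y i ≤ t * x i := by simp [L]
  set d := 1 - ∑ i ∈ univ \ L, x i
  have hnear : ∀ᶠ s in 𝓝[>] t, ∀ i ∈ univ \ L, s * x i ≤ y i := by
    refine nhdsWithin_le_nhds ((eventually_all_finset _).2 fun i hi => ?_)
    have : t * x i < y i := not_le.1 fun h => (mem_sdiff.1 hi).2 ((hmem i).2 h)
    exact ((continuous_id.mul continuous_const).continuousAt.eventually_lt continuousAt_const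
      this).mono fun _ => le_of_lt
  have hGt_nonneg : 0 ≤ G t :=
    ge_of_tendsto ((hGc.tendsto t).mono_left (nhdsWithin_le_nhds (s := Set.Ioi t)))
      (eventually_nhdsWithin_of_forall fun s hs => (hpos s hs).le)
  obtain ⟨s, hs, hts⟩ := (hnear.and self_mem_nhdsWithin).exists
  have hGt_eq : G t = t * d - ∑ i ∈ L, y i := sub_sum_min_eq (fun i hi => (hmem i).1 hi)
    fun i hi => (not_le.1 fun h => (mem_sdiff.1 hi).2 ((hmem i).2 h)).le
  have hGs : 0 < s * d - ∑ i ∈ L, y i := by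
    rw [← sub_sum_min_eq (fun i hi => ((hmem i).1 hi).trans (by gcongr; exact hx i)) hs]
    exact hpos s hts
  change G t ≤ 0 at hGt_nonpos
  rw [hGt_eq] at hGt_nonpos hGt_nonneg
  exact ⟨t, L, ⟨ht, hmem, by nlinarith, by linarith⟩⟩

namespace IsThreshold

variable {t : ℝ} {L : Finset ι}

theorem lt_of_notMem (h : IsThreshold x y t L) {i : ι} (hi : i ∉ L) : t * x i < y i :=
  not_le.1 fun hle => hi ((h.mem_iff i).2 hle)

theorem pos_of_notMem (h : IsThreshold x y t L) (hx : ∀ i, 0 ≤ x i)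
    (hxy : ∀ i, x i = 0 → y i = 0) {i : ι} (hi : i ∉ L) : 0 < x i := by
  refine (hx i).lt_of_ne fun h0 => ?_
  have := h.lt_of_notMem hi
  rw [← h0, hxy i h0.symm, mul_zero] at this
  exact this.false

theorem sum_coordGain_le_of_mem (h : IsThreshold x y t L) (hx : ∀ i, 0 ≤ x i)
    (hy : ∀ i, 0 ≤ y i) {s : ℝ} (hs : 0 ≤ s) :
    ∑ i ∈ L, coordGain (x i) (y i) s ≤ (s ^ 2 + t ^ 2) * (1 - ∑ i ∈ univ \ L, x i) := by
  rcases h.nonneg.eq_or_lt with ht | ht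
  · have hyL : ∀ i ∈ L, y i ≤ s * x i := fun i hi =>
      ((h.mem_iff i).1 hi).trans (by rw [← ht, zero_mul]; exact mul_nonneg hs (hx i))
    rw [sum_congr rfl fun i hi => coordGain_of_le (hyL i hi), ← mul_sum, h.sum_eq, ← ht]
    nlinarith [h.slack_pos]
  · refine le_of_mul_le_mul_right ?_ ht
    calc (∑ i ∈ L, coordGain (x i) (y i) s) * t
        ≤ ∑ i ∈ L, (s ^ 2 + t ^ 2) * y i := by
          rw [sum_mul]
          exact sum_le_sum fun i hi => coordGain_mul_le (hx i) (hy i) hs ((h.mem_iff i).1 hi)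
      _ = (s ^ 2 + t ^ 2) * (1 - ∑ i ∈ univ \ L, x i) * t := by
          rw [← mul_sum, h.sum_eq]
          ring

theorem sum_coordGain_le (h : IsThreshold x y t L) (hx : ∀ i, 0 ≤ x i) (hy : ∀ i, 0 ≤ y i)
    (hxy : ∀ i, x i = 0 → y i = 0) {s : ℝ} (hs : 0 ≤ s) :
    -s ^ 2 + ∑ i, coordGain (x i) (y i) s
      ≤ t ^ 2 * (1 - ∑ i ∈ univ \ L, x i) + ∑ i ∈ univ \ L, y i ^ 2 / x i := by
  have hout : ∑ i ∈ univ \ L, coordGain (x i) (y i) s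
      ≤ ∑ i ∈ univ \ L, y i ^ 2 / x i + s ^ 2 * ∑ i ∈ univ \ L, x i := by
    rw [mul_sum, ← sum_add_distrib]
    exact sum_le_sum fun i hi => coordGain_le (h.pos_of_notMem hx hxy (mem_sdiff.1 hi).2)
  rw [← sum_sdiff (subset_univ L)]
  linarith [h.sum_coordGain_le_of_mem hx hy hs]

theorem sum_coordGain_self (h : IsThreshold x y t L) (hx : ∀ i, 0 ≤ x i)
    (hxy : ∀ i, x i = 0 → y i = 0) :
    -t ^ 2 + ∑ i, coordGain (x i) (y i) t
      = t ^ 2 * (1 - ∑ i ∈ univ \ L, x i) + ∑ i ∈ univ \ L, y i ^ 2 / x i := by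
  have hin : ∀ i ∈ L, coordGain (x i) (y i) t = 2 * t * y i := fun i hi =>
    coordGain_of_le ((h.mem_iff i).1 hi)
  have hout : ∀ i ∈ univ \ L, coordGain (x i) (y i) t = y i ^ 2 / x i + t ^ 2 * x i :=
    fun i hi => coordGain_of_lt (h.pos_of_notMem hx hxy (mem_sdiff.1 hi).2)
      (h.lt_of_notMem (mem_sdiff.1 hi).2)
  rw [← sum_sdiff (subset_univ L), sum_congr rfl hin, sum_congr rfl hout, sum_add_distrib,
    ← mul_sum, ← mul_sum, h.sum_eq]
  ring

end IsThreshold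

end Threshold

section Objective

variable [Fintype ι] [DecidableEq ι] {x y : ι → ℝ}

def liftingObjective (x y : ι → ℝ) (S : Finset ι) (α : ι → ℝ) : ℝ :=
  -(mAlpha α S) ^ 2 / 4
    - (∑ i ∈ Finset.univ \ S, max ((α i) ^ 2 - (mAlpha α S) ^ 2) 0 * x i / 4)
    + ∑ i, α i * y i

theorem Psi_eq_iSup (x y : ι → ℝ) :
    Psi x y = ⨆ (S : Finset ι) (α : ι → ℝ) (_ : ∀ i, 0 ≤ α i), (liftingObjective x y S α : EReal) :=
  rfl

/-- The penalty vanishes on `S`, where `αᵢ ≤ m_α(S)`. -/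
theorem liftingObjective_eq_sum {S : Finset ι} {α : ι → ℝ} (hα : ∀ i, 0 ≤ α i) :
    liftingObjective x y S α = -(mAlpha α S) ^ 2 / 4
      + ∑ i, (α i * y i - max (α i ^ 2 - mAlpha α S ^ 2) 0 * x i / 4) := by
  have hS : ∀ i ∈ univ, i ∉ univ \ S → max (α i ^ 2 - mAlpha α S ^ 2) 0 * x i / 4 = 0 :=
    fun i _ hi => by
      have hle := le_mAlpha α S (by simpa using hi)
      rw [max_eq_right (by nlinarith [hα i]), zero_mul, zero_div]
  rw [liftingObjective, sum_subset (subset_univ _) hS, sum_sub_distrib]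
  ring

theorem liftingObjective_le (hx : ∀ i, 0 ≤ x i) (hy : ∀ i, 0 ≤ y i)
    (hxy : ∀ i, x i = 0 → y i = 0) (S : Finset ι) {α : ι → ℝ} (hα : ∀ i, 0 ≤ α i) :
    liftingObjective x y S α
      ≤ -(mAlpha α S / 2) ^ 2 + ∑ i, coordGain (x i) (y i) (mAlpha α S / 2) := by
  have hs : 0 ≤ mAlpha α S / 2 := by linarith [mAlpha_nonneg α S]
  rw [liftingObjective_eq_sum hα]
  calc _ = -(mAlpha α S / 2) ^ 2
        + ∑ i, (α i * y i - max (α i ^ 2 - (2 * (mAlpha α S / 2)) ^ 2) 0 * x i / 4) := by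
        ring_nf
    _ ≤ _ := by
      gcongr with i
      exact mul_sub_penalty_le_coordGain (hx i) (hy i) (hxy i) (hα i) hs

theorem IsThreshold.exists_liftingObjective_eq {t : ℝ} {L : Finset ι}
    (h : IsThreshold x y t L) (hx : ∀ i, 0 ≤ x i) (hy : ∀ i, 0 ≤ y i)
    (hxy : ∀ i, x i = 0 → y i = 0) :
    ∃ α : ι → ℝ, (∀ i, 0 ≤ α i) ∧
      liftingObjective x y L α = -t ^ 2 + ∑ i, coordGain (x i) (y i) t := by
  set α : ι → ℝ := fun i => if i ∈ L then 2 * t else 2 * y i / x i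
  have hα : ∀ i, 0 ≤ α i := fun i => by
    by_cases hi : i ∈ L
    · simp [α, hi, h.nonneg]
    · simp only [α, hi, if_false]
      exact div_nonneg (by linarith [hy i]) (hx i)
  have hm : mAlpha α L = 2 * t := by
    rcases L.eq_empty_or_nonempty with rfl | ⟨j, hj⟩
    · have ht : t = 0 := by
        have := h.sum_eq
        rw [sum_empty, eq_comm, mul_eq_zero] at this
        exact this.resolve_right h.slack_pos.ne'
      simp [mAlpha, ht]
    · refine le_antisymm (mAlpha_le α L (by linarith [h.nonneg]) fun i hi => by simp [α, hi]) ?_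
      simpa [α, hj] using le_mAlpha α L hj
  refine ⟨α, hα, ?_⟩
  rw [liftingObjective_eq_sum hα, hm]
  congr 1
  · ring
  refine sum_congr rfl fun i _ => ?_
  by_cases hi : i ∈ L
  · simp [α, hi, coordGain_of_le ((h.mem_iff i).1 hi)]
  · simp only [α, hi, if_false]
    exact mul_sub_penalty_eq_coordGain (h.pos_of_notMem hx hxy hi) h.nonneg (h.lt_of_notMem hi)

end Objective

section PsiValue

variable [Fintype ι] [DecidableEq ι] {x y : ι → ℝ}

theorem IsThreshold.Psi_eq_coe {t : ℝ} {L : Finset ι} (h : IsThreshold x y t L)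
    (hx : ∀ i, 0 ≤ x i) (hy : ∀ i, 0 ≤ y i) (hxy : ∀ i, x i = 0 → y i = 0) :
    Psi x y = ((t ^ 2 * (1 - ∑ i ∈ univ \ L, x i) + ∑ i ∈ univ \ L, y i ^ 2 / x i : ℝ) : EReal) := by
  rw [Psi_eq_iSup]
  refine le_antisymm (iSup₂_le fun S α => iSup_le fun hα => EReal.coe_le_coe_iff.2 ?_) ?_
  · exact (liftingObjective_le hx hy hxy S hα).trans
      (h.sum_coordGain_le hx hy hxy (by linarith [mAlpha_nonneg α S]))
  · obtain ⟨α, hα, hval⟩ := h.exists_liftingObjective_eq hx hy hxy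
    refine le_iSup₂_of_le L α (le_iSup_of_le hα (EReal.coe_le_coe_iff.2 ?_))
    rw [hval, h.sum_coordGain_self hx hxy]

theorem Psi_eq_top {i : ι} (hxi : x i = 0) (hyi : 0 < y i) : Psi x y = ⊤ := by
  have hval : ∀ c, liftingObjective x y ∅ (Pi.single i c) = c * y i := fun c => by
    have hpen : ∀ j, max (Pi.single i c j ^ 2 - 0 ^ 2) 0 * x j / 4 = 0 := fun j => by
      by_cases hj : j = i <;> simp [hj, hxi]
    simp only [liftingObjective, mAlpha, fold_empty, sdiff_empty, hpen, sum_const_zero]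
    rw [Fintype.sum_eq_single i fun j hj => by simp [hj]]
    simp
  refine (EReal.eq_top_iff_forall_lt _).2 fun r => ?_
  set c := |r| / y i + 1
  have hc : 0 ≤ c := by positivity
  calc (r : EReal) < ((c * y i : ℝ) : EReal) := by
        refine EReal.coe_lt_coe_iff.2 ?_
        rw [add_mul, div_mul_cancel₀ _ hyi.ne']
        linarith [le_abs_self r]
    _ ≤ Psi x y := by
      rw [Psi_eq_iSup, ← hval]
      exact le_iSup₂_of_le ∅ (Pi.single i c)
        (le_iSup_of_le (Pi.single_nonneg.2 hc : (0 : ι → ℝ) ≤ Pi.single i c) le_rfl)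

theorem IsThreshold.ratio_sum_eq {t : ℝ} {L : Finset ι} (h : IsThreshold x y t L) :
    ratio (∑ j ∈ L, y j) (1 - ∑ j ∈ univ \ L, x j) = t := by
  rw [ratio_of_ne_zero h.slack_pos.ne', h.sum_eq, mul_div_cancel_right₀ _ h.slack_pos.ne']

theorem IsThreshold.Psi_eq {t : ℝ} {L : Finset ι} (h : IsThreshold x y t L)
    (hx : ∀ i, 0 ≤ x i) (hy : ∀ i, 0 ≤ y i) :
    Psi x y = ratio ((∑ i ∈ L, y i) ^ 2) (1 - ∑ i ∈ univ \ L, x i)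
      + ∑ i ∈ univ \ L, ratio (y i ^ 2) (x i) := by
  have hd := h.slack_pos.ne'
  by_cases hxy : ∀ i, x i = 0 → y i = 0
  · rw [h.Psi_eq_coe hx hy hxy, EReal.coe_add, ratio_of_ne_zero hd, h.sum_eq,
      EReal.coe_finset_sum]
    congr 1
    · congr 1
      field_simp
    · exact sum_congr rfl fun i hi =>
        (ratio_of_ne_zero (h.pos_of_notMem hx hxy (mem_sdiff.1 hi).2).ne').symm
  push Not at hxy
  obtain ⟨i, hxi, hyi⟩ := hxy
  have hyi : 0 < y i := (hy i).lt_of_ne' hyi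
  have hi : i ∉ L := fun hiL => by
    have := (h.mem_iff i).1 hiL
    rw [hxi, mul_zero] at this
    linarith
  rw [Psi_eq_top hxi hyi, ratio_of_ne_zero hd,
    EReal.sum_eq_top_of_mem (fun j _ => ratio_nonneg (sq_nonneg _) (hx j)) (by simpa using hi)
      (by rw [hxi]; exact ratio_zero_right (by positivity)), EReal.coe_add_top]

end PsiValue

/-- Ψ in the original space of variables.
For every `(x,y) ∈ [0,1]^N × ℝ₊^N` there is a (possibly empty) set `L ⊆ N` with
(a) `x(N\L) ≤ 1`, (b) `y(L)/(1−x(N\L)) < y_i/x_i` for `i ∈ N\L`,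
(c) `y(L)/(1−x(N\L)) ≥ y_i/x_i` for `i ∈ L`, and
`Ψ(x,y) = y(L)²/(1−x(N\L)) + ∑_{i ∈ N\L} y_i²/x_i`. -/
theorem stmt_15 {ι : Type*} [Fintype ι] [DecidableEq ι]
    (x y : ι → ℝ) (hx : ∀ i, 0 ≤ x i ∧ x i ≤ 1) (hy : ∀ i, 0 ≤ y i) :
    ∃ L : Finset ι,
      ((∑ i ∈ Finset.univ \ L, x i) ≤ 1) ∧
      (∀ i ∈ Finset.univ \ L,
        ratio (∑ j ∈ L, y j) (1 - ∑ j ∈ Finset.univ \ L, x j) < ratio (y i) (x i)) ∧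
      (∀ i ∈ L,
        ratio (y i) (x i) ≤ ratio (∑ j ∈ L, y j) (1 - ∑ j ∈ Finset.univ \ L, x j)) ∧
      Psi x y = ratio ((∑ i ∈ L, y i) ^ 2) (1 - ∑ i ∈ Finset.univ \ L, x i)
          + ∑ i ∈ Finset.univ \ L, ratio ((y i) ^ 2) (x i) := by
  have hx0 : ∀ i, 0 ≤ x i := fun i => (hx i).1
  obtain ⟨t, L, h⟩ := IsThreshold.exists hx0 hy
  refine ⟨L, by linarith [h.slack_pos], fun i hi => ?_, fun i hi => ?_, h.Psi_eq hx0 hy⟩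
  · rw [h.ratio_sum_eq]
    exact coe_lt_ratio (hx0 i) (h.lt_of_notMem (mem_sdiff.1 hi).2)
  · rw [h.ratio_sum_eq]
    exact ratio_le_coe (hy i) (hx0 i) h.nonneg ((h.mem_iff i).1 hi)

end
end

section
/- For every partition (L,R,U) of N⁺, the extended inequality is valid for X: for every (x,y,t) ∈ X, φ_{L,R,U}(x,y) ≤ t, where φ_{L,R,U}(x,y) is the optimal value of: minimize (y(L)−λ₀)²/(1−x(R)−x(U)+μ(R)+μ₀) + Σ_{i∈R} (y_i−λ_i)²/(x_i−μ_i) + (y(U)−y(N⁻)+λ₀+λ(R)+ζ)²/(x(U)−μ₀) over λ ∈ ℝ₊^R, μ ∈ ℝ₊^R, λ₀, μ₀, ζ ∈ ℝ₊ subject to 1−x(R)−x(U)+μ(R)+μ₀ ≥ 0, μ_i ≤ x_i for all i ∈ R, and μ₀ ≤ x(U). -/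
open Finset

noncomputable section

variable {ι : Type*}

/-- Objective of the extended formulation of the lifted supermodular inequality for the
partition `(L,R,U)`; `Nother` is the "other side" of the partition of `N`
(`N⁻` for the inequalities over `B⁺`, and `N⁺` for those over `B⁻`). -/
def objX [Fintype ι] (Nother L R U : Finset ι) (x y : ι → ℝ)
    (lam mu : ι → ℝ) (lam0 mu0 zeta : ℝ) : EReal :=
  ratio (((∑ i ∈ L, y i) - lam0) ^ 2)
      (1 - (∑ i ∈ R, x i) - (∑ i ∈ U, x i) + (∑ i ∈ R, mu i) + mu0)
    + (∑ i ∈ R, ratio ((y i - lam i) ^ 2) (x i - mu i))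
    + ratio (((∑ i ∈ U, y i) - (∑ i ∈ Nother, y i) + lam0 + (∑ i ∈ R, lam i) + zeta) ^ 2)
      ((∑ i ∈ U, x i) - mu0)

/-- Feasibility of `(λ, μ, λ₀, μ₀, ζ)` in the extended formulation:
`λ, μ ∈ ℝ₊^R`, `λ₀, μ₀, ζ ∈ ℝ₊`, `1 − x(R) − x(U) + μ(R) + μ₀ ≥ 0`,
`μ_i ≤ x_i` for `i ∈ R`, and `μ₀ ≤ x(U)`. -/
def feasX [Fintype ι] (R U : Finset ι) (x : ι → ℝ)
    (lam mu : ι → ℝ) (lam0 mu0 zeta : ℝ) : Prop :=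
  (∀ i, 0 ≤ lam i) ∧ (∀ i, 0 ≤ mu i) ∧ 0 ≤ lam0 ∧ 0 ≤ mu0 ∧ 0 ≤ zeta ∧
  0 ≤ 1 - (∑ i ∈ R, x i) - (∑ i ∈ U, x i) + (∑ i ∈ R, mu i) + mu0 ∧
  (∀ i ∈ R, mu i ≤ x i) ∧ mu0 ≤ ∑ i ∈ U, x i

/-- `φ_{L,R,U}(x,y)`: the optimal value of the extended formulation. -/
def phiX [Fintype ι] (Nother L R U : Finset ι) (x y : ι → ℝ) : EReal :=
  sInf {v : EReal | ∃ lam mu : ι → ℝ, ∃ lam0 mu0 zeta : ℝ,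
    feasX R U x lam mu lam0 mu0 zeta ∧ v = objX Nother L R U x y lam mu lam0 mu0 zeta}

/-- The rank-one set `X` associated with the partition `N = N⁺ ∪ N⁻`. -/
def XSet [Fintype ι] (Np Nm : Finset ι) : Set ((ι → ℝ) × (ι → ℝ) × ℝ) :=
  {p | (∀ i, p.1 i = 0 ∨ p.1 i = 1) ∧ (∀ i, 0 ≤ p.2.1 i) ∧ 0 ≤ p.2.2 ∧
       ((∑ i ∈ Np, p.2.1 i) - (∑ i ∈ Nm, p.2.1 i)) ^ 2 ≤ p.2.2 ∧
       ∀ i, p.2.1 i * (1 - p.1 i) = 0}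

/-! If `y(N⁺) ≤ y(N⁻)`, the feasible point `λ = y`, `μ = x`, `λ₀ = y(L)`, `μ₀ = x(U)`,
`ζ = y(N⁻) - y(N⁺)` makes every numerator vanish, so `φ ≤ 0 ≤ t`.

Otherwise `P = y(N⁺) > 0`, and `y_i ≤ P x_i` because `x` is binary and `y_i (1 - x_i) = 0`.
With `s = 1 - y(N⁻)/P`, take `λ = (1 - s) y`, `μ_i = x_i - y_i/P`, `λ₀ = (1 - s) y(L)`,
`μ₀ = x(U) - y(U)/P`, `ζ = 0`: the denominator of the block `S ∈ {L, R, U}` becomes `y(S)/P` and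
its numerator `(s y(S))²`, so the objective is `s² P (y(L) + y(R) + y(U)) = (P - y(N⁻))² ≤ t`. -/

lemma ratio_zero_left (b : ℝ) : ratio 0 b = 0 := by
  unfold ratio; split_ifs <;> simp_all

lemma ratio_mul_sq_div (k a P : ℝ) (ha : 0 ≤ a) (hP : 0 < P) :
    ratio ((k * a) ^ 2) (a / P) = ((k ^ 2 * a * P : ℝ) : EReal) := by
  rcases ha.eq_or_lt with rfl | ha
  · simpa using ratio_zero_left (0 / P)
  · rw [ratio, if_neg (by positivity)]
    norm_cast
    field_simp

lemma EReal.coe_finset_sum_s17 (s : Finset ι) (f : ι → ℝ) :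
    ((∑ i ∈ s, f i : ℝ) : EReal) = ∑ i ∈ s, (f i : EReal) :=
  map_sum (⟨⟨Real.toEReal, EReal.coe_zero⟩, EReal.coe_add⟩ : ℝ →+ EReal) f s

lemma Finset.sum_union_union [DecidableEq ι] {M : Type*} [AddCommMonoid M] {L R U : Finset ι}
    (hLR : Disjoint L R) (hLU : Disjoint L U) (hRU : Disjoint R U) (f : ι → M) :
    ∑ i ∈ L ∪ R ∪ U, f i = ∑ i ∈ L, f i + ∑ i ∈ R, f i + ∑ i ∈ U, f i := by
  rw [sum_union (disjoint_union_left.mpr ⟨hLU, hRU⟩), sum_union hLR]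

lemma le_mul_of_mul_one_sub_eq_zero {a b P : ℝ} (hb : b = 0 ∨ b = 1) (hab : a * (1 - b) = 0)
    (haP : a ≤ P) : a ≤ P * b := by
  rcases hb with rfl | rfl
  · simpa using hab.le
  · simpa using haP

lemma sum_ite_mem_sub_div [DecidableEq ι] (R : Finset ι) (x y : ι → ℝ) (P : ℝ) :
    ∑ i ∈ R, (if i ∈ R then x i - y i / P else 0) = ∑ i ∈ R, x i - (∑ i ∈ R, y i) / P := by
  rw [sum_congr rfl fun i hi => if_pos hi, sum_sub_distrib, sum_div]

section

variable [Fintype ι] {Nother L R U : Finset ι} {x y : ι → ℝ}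

lemma phiX_le_objX {lam mu : ι → ℝ} {lam0 mu0 zeta : ℝ} (h : feasX R U x lam mu lam0 mu0 zeta) :
    phiX Nother L R U x y ≤ objX Nother L R U x y lam mu lam0 mu0 zeta :=
  sInf_le ⟨lam, mu, lam0, mu0, zeta, h, rfl⟩

variable [DecidableEq ι] {P s : ℝ}

lemma phiX_nonpos_of_sum_le (hLR : Disjoint L R) (hLU : Disjoint L U) (hRU : Disjoint R U)
    (hx : ∀ i, 0 ≤ x i) (hy : ∀ i, 0 ≤ y i)
    (hle : ∑ i ∈ L ∪ R ∪ U, y i ≤ ∑ i ∈ Nother, y i) :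
    phiX Nother L R U x y ≤ 0 := by
  have hsplit := sum_union_union hLR hLU hRU y
  refine (phiX_le_objX (lam := y) (mu := x) (lam0 := ∑ i ∈ L, y i) (mu0 := ∑ i ∈ U, x i)
    (zeta := ∑ i ∈ Nother, y i - ∑ i ∈ L ∪ R ∪ U, y i) ⟨hy, hx, sum_nonneg fun i _ => hy i,
      sum_nonneg fun i _ => hx i, by linarith, by linarith, fun _ _ => le_rfl, le_rfl⟩).trans_eq ?_
  have hthird : ∑ i ∈ U, y i - ∑ i ∈ Nother, y i + ∑ i ∈ L, y i + ∑ i ∈ R, y i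
      + (∑ i ∈ Nother, y i - ∑ i ∈ L ∪ R ∪ U, y i) = 0 := by
    rw [hsplit]; ring
  unfold objX
  rw [sub_self, hthird]
  simp [ratio_zero_left]

lemma feasX_perspective (hP : 0 < P) (hs1 : s ≤ 1) (hy : ∀ i, 0 ≤ y i)
    (hRU : ∑ i ∈ R, y i + ∑ i ∈ U, y i ≤ P) (hR : ∀ i ∈ R, y i ≤ P * x i)
    (hU : ∀ i ∈ U, y i ≤ P * x i) :
    feasX R U x (fun i => (1 - s) * y i) (fun i => if i ∈ R then x i - y i / P else 0)
      ((1 - s) * ∑ i ∈ L, y i) (∑ i ∈ U, x i - (∑ i ∈ U, y i) / P) 0 := by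
  have hdiv : ∀ i, 0 ≤ y i / P := fun i => div_nonneg (hy i) hP.le
  have hRdiv : ∀ i ∈ R, y i / P ≤ x i := fun i hi => by
    rw [div_le_iff₀' hP]; exact hR i hi
  have hUdiv : (∑ i ∈ U, y i) / P ≤ ∑ i ∈ U, x i := by
    rw [div_le_iff₀' hP, mul_sum]; exact sum_le_sum hU
  have hRUdiv : (∑ i ∈ R, y i) / P + (∑ i ∈ U, y i) / P ≤ 1 := by
    rw [← add_div, div_le_one hP]; exact hRU
  have hUnn : 0 ≤ (∑ i ∈ U, y i) / P := div_nonneg (sum_nonneg fun i _ => hy i) hP.le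
  refine ⟨fun i => mul_nonneg (by linarith) (hy i), fun i => ?_,
    mul_nonneg (by linarith) (sum_nonneg fun i _ => hy i), by linarith, le_rfl,
    by rw [sum_ite_mem_sub_div]; linarith, fun i hi => ?_, by linarith⟩
  · dsimp only
    split_ifs with hi
    · linarith [hRdiv i hi]
    · exact le_rfl
  · dsimp only
    rw [if_pos hi]; linarith [hdiv i]

lemma objX_perspective (hP : 0 < P) (hy : ∀ i, 0 ≤ y i)
    (hsplit : ∑ i ∈ L, y i + ∑ i ∈ R, y i + ∑ i ∈ U, y i = P)
    (hs : s * P = P - ∑ i ∈ Nother, y i) :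
    objX Nother L R U x y (fun i => (1 - s) * y i) (fun i => if i ∈ R then x i - y i / P else 0)
      ((1 - s) * ∑ i ∈ L, y i) (∑ i ∈ U, x i - (∑ i ∈ U, y i) / P) 0
      = (((s * P) ^ 2 : ℝ) : EReal) := by
  have hL : 1 - ∑ i ∈ R, x i - ∑ i ∈ U, x i + (∑ i ∈ R, x i - (∑ i ∈ R, y i) / P)
      + (∑ i ∈ U, x i - (∑ i ∈ U, y i) / P) = (∑ i ∈ L, y i) / P := by
    field_simp; linarith
  have hU : ∑ i ∈ U, y i - ∑ i ∈ Nother, y i + (1 - s) * ∑ i ∈ L, y i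
      + ∑ i ∈ R, (1 - s) * y i + 0 = s * ∑ i ∈ U, y i := by
    rw [← mul_sum]; linear_combination (1 - s) * hsplit - hs
  have hR : ∀ i ∈ R, ratio ((y i - (1 - s) * y i) ^ 2)
      (x i - if i ∈ R then x i - y i / P else 0) = ((s ^ 2 * y i * P : ℝ) : EReal) := by
    intro i hi
    rw [if_pos hi, show x i - (x i - y i / P) = y i / P by ring,
      show y i - (1 - s) * y i = s * y i by ring, ratio_mul_sq_div _ _ _ (hy i) hP]
  unfold objX
  rw [sum_ite_mem_sub_div, hL, show ∑ i ∈ L, y i - (1 - s) * ∑ i ∈ L, y i = s * ∑ i ∈ L, y i by ring, hU,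
    show ∑ i ∈ U, x i - (∑ i ∈ U, x i - (∑ i ∈ U, y i) / P) = (∑ i ∈ U, y i) / P by ring,
    sum_congr rfl hR, ratio_mul_sq_div _ _ _ (sum_nonneg fun i _ => hy i) hP,
    ratio_mul_sq_div _ _ _ (sum_nonneg fun i _ => hy i) hP, ← EReal.coe_finset_sum_s17]
  norm_cast
  rw [← sum_mul, ← mul_sum]
  linear_combination (s ^ 2 * P) * hsplit

lemma phiX_le_sq_of_lt (hLR : Disjoint L R) (hLU : Disjoint L U) (hRU : Disjoint R U)
    (hy : ∀ i, 0 ≤ y i) (hlt : ∑ i ∈ Nother, y i < ∑ i ∈ L ∪ R ∪ U, y i)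
    (hR : ∀ i ∈ R, y i ≤ (∑ j ∈ L ∪ R ∪ U, y j) * x i)
    (hU : ∀ i ∈ U, y i ≤ (∑ j ∈ L ∪ R ∪ U, y j) * x i) :
    phiX Nother L R U x y ≤ (((∑ i ∈ L ∪ R ∪ U, y i - ∑ i ∈ Nother, y i) ^ 2 : ℝ) : EReal) := by
  set P := ∑ i ∈ L ∪ R ∪ U, y i
  have hsplit : ∑ i ∈ L, y i + ∑ i ∈ R, y i + ∑ i ∈ U, y i = P :=
    (sum_union_union hLR hLU hRU y).symm
  have hNother : 0 ≤ ∑ i ∈ Nother, y i := sum_nonneg fun i _ => hy i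
  have hP : 0 < P := hNother.trans_lt hlt
  have hs : (P - ∑ i ∈ Nother, y i) / P * P = P - ∑ i ∈ Nother, y i := div_mul_cancel₀ _ hP.ne'
  have hs1 : (P - ∑ i ∈ Nother, y i) / P ≤ 1 := (div_le_one hP).mpr (by linarith)
  have hRU : ∑ i ∈ R, y i + ∑ i ∈ U, y i ≤ P := by
    linarith [sum_nonneg fun i (_ : i ∈ L) => hy i]
  calc phiX Nother L R U x y
      ≤ _ := phiX_le_objX (feasX_perspective (L := L) hP hs1 hy hRU hR hU)
    _ = _ := objX_perspective hP hy hsplit hs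
    _ = _ := by rw [hs]

end

theorem stmt_17_general [Fintype ι] [DecidableEq ι] (Np Nm : Finset ι)
    (L R U : Finset ι) (hLR : Disjoint L R) (hLU : Disjoint L U) (hRU : Disjoint R U)
    (hpart : L ∪ R ∪ U = Np)
    (x y : ι → ℝ) (t : ℝ) (hmem : (x, y, t) ∈ XSet Np Nm) :
    phiX Nm L R U x y ≤ ((t : ℝ) : EReal) := by
  simp only [XSet, Set.mem_ofPred_eq] at hmem
  obtain ⟨hx, hy, ht, hsq, hyx⟩ := hmem
  subst hpart
  rcases le_or_gt (∑ i ∈ L ∪ R ∪ U, y i) (∑ i ∈ Nm, y i) with hle | hlt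
  · have hx0 : ∀ i, 0 ≤ x i := fun i => by rcases hx i with h | h <;> simp [h]
    exact (phiX_nonpos_of_sum_le hLR hLU hRU hx0 hy hle).trans (mod_cast ht)
  · have hdom : ∀ i ∈ L ∪ R ∪ U, y i ≤ (∑ j ∈ L ∪ R ∪ U, y j) * x i := fun i hi =>
      le_mul_of_mul_one_sub_eq_zero (hx i) (hyx i) (single_le_sum (fun j _ => hy j) hi)
    refine (phiX_le_sq_of_lt hLR hLU hRU hy hlt (fun i hi => hdom i ?_)
      (fun i hi => hdom i ?_)).trans (mod_cast hsq)
    · simp [hi]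
    · simp [hi]

/-- For every partition `(L,R,U)` of `N⁺`, the extended inequality
`φ_{L,R,U}(x,y) ≤ t` is valid for every `(x,y,t) ∈ X`. -/
theorem stmt_17 [Fintype ι] [DecidableEq ι] (Np Nm : Finset ι)
    (hNdisj : Disjoint Np Nm) (hNunion : Np ∪ Nm = Finset.univ)
    (L R U : Finset ι) (hLR : Disjoint L R) (hLU : Disjoint L U) (hRU : Disjoint R U)
    (hpart : L ∪ R ∪ U = Np)
    (x y : ι → ℝ) (t : ℝ) (hmem : (x, y, t) ∈ XSet Np Nm) :
    phiX Nm L R U x y ≤ ((t : ℝ) : EReal) :=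
  stmt_17_general Np Nm L R U hLR hLU hRU hpart x y t hmem

end
end
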